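/- arXiv:math/0205199 — 7 statements merged into one kernel-verified Lean document; each statement's English description precedes it below -/
import Mathlib

section
/- Let H be a smooth affine group scheme over Spec(W(k)) with a closed embedding H ↪ GL(O) for a free W(k)-module O of finite rank, k perfect of characteristic p. Let l ∈ ℕ and let g ∈ H(W(k)) be congruent mod p^l to 1_O. Then for any i ∈ {1,...,l} there exists z ∈ Lie(H) such that g is congruent mod p^{i+l} to 1_O + p^l·z. -/
/-!
Write `t = p^i`, `s = p^l` and `g = 1 + s y`. As `t ∣ s` and `s` is a non-zero-divisor,
`a + bε ↦ (a, a + bs)` embeds `W(k)[ε]/(tε)` into `W(k) × W(k)/(ts)`, sending `1 + εy` to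
`(1, g mod ts)`. Both components are points of `H`, and `H` is cut out by equations, so
`1 + εy ∈ H(W(k)[ε]/(tε))`. The ideal `(tε)` has square zero, so by smoothness `1 + εy` lifts
to a point `1 + εz ∈ H(W(k)[ε])` with `z = y + t c`. Then `z ∈ Lie(H)` and
`g = 1 + s z - ts c`.
-/

noncomputable section

/-- A closed subgroup scheme `H` of `GL_O` (with `O` free of rank `r`) over `W(k)`, given by
its functor of points: for every commutative `W(k)`-algebra `S`, a subgroup `H(S)` of
`GL_r(S)`, cut out by polynomial equations in the matrix entries of `g` and `g⁻¹`. -/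
structure ClosedSubgroupGL (p : ℕ) [Fact p.Prime] (k : Type) [CommRing k] (r : ℕ) where
  pts : ∀ (S : Type) [CommRing S] [Algebra (WittVector p k) S],
    Set ((Matrix (Fin r) (Fin r) S)ˣ)
  closed : ∃ T : Set (MvPolynomial ((Fin r × Fin r) ⊕ (Fin r × Fin r)) (WittVector p k)),
    ∀ (S : Type) [CommRing S] [Algebra (WittVector p k) S],
      ∀ g : (Matrix (Fin r) (Fin r) S)ˣ,
        g ∈ pts S ↔ ∀ f ∈ T,
          MvPolynomial.aeval
            (Sum.elim (fun ij : Fin r × Fin r => (g : Matrix (Fin r) (Fin r) S) ij.1 ij.2)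
              (fun ij : Fin r × Fin r =>
                ((g⁻¹ : (Matrix (Fin r) (Fin r) S)ˣ) : Matrix (Fin r) (Fin r) S) ij.1 ij.2))
            f = 0
  one_mem : ∀ (S : Type) [CommRing S] [Algebra (WittVector p k) S], 1 ∈ pts S
  mul_mem : ∀ (S : Type) [CommRing S] [Algebra (WittVector p k) S],
    ∀ g h : (Matrix (Fin r) (Fin r) S)ˣ, g ∈ pts S → h ∈ pts S → g * h ∈ pts S
  inv_mem : ∀ (S : Type) [CommRing S] [Algebra (WittVector p k) S],
    ∀ g : (Matrix (Fin r) (Fin r) S)ˣ, g ∈ pts S → g⁻¹ ∈ pts S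

/-- `H` is smooth over `Spec W(k)`: it is formally smooth, i.e. points lift through
square-zero extensions. -/
def IsSmoothGS (p : ℕ) [Fact p.Prime] (k : Type) [CommRing k] (r : ℕ)
    (H : ClosedSubgroupGL p k r) : Prop :=
  ∀ (S : Type) [CommRing S] [Algebra (WittVector p k) S] (J : Ideal S), J ^ 2 = ⊥ →
    ∀ h ∈ H.pts (S ⧸ J), ∃ g ∈ H.pts S,
      Units.map (RingHom.toMonoidHom ((Ideal.Quotient.mk J).mapMatrix)) g = h

/-- `Lie(H) ⊆ End(O)`: the matrices `z` with `1 + ε z ∈ H(W(k)[ε])`. -/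
def LieGS (p : ℕ) [Fact p.Prime] (k : Type) [CommRing k] (r : ℕ)
    (H : ClosedSubgroupGL p k r) : Set (Matrix (Fin r) (Fin r) (WittVector p k)) :=
  {z | ∃ u : (Matrix (Fin r) (Fin r) (DualNumber (WittVector p k)))ˣ,
    (u : Matrix (Fin r) (Fin r) (DualNumber (WittVector p k))) =
      1 + (DualNumber.eps : DualNumber (WittVector p k)) •
        (z.map (algebraMap (WittVector p k) (DualNumber (WittVector p k)))) ∧
    u ∈ H.pts (DualNumber (WittVector p k))}

open DualNumber TrivSqZeroExt MvPolynomial Matrix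

namespace DualNumber

variable {R : Type*} [CommRing R] {n : Type*}

def epsIdeal (t : R) : Ideal R[ε] := Ideal.span {inr t}

theorem epsIdeal_sq (t : R) : epsIdeal t ^ 2 = ⊥ := by
  rw [epsIdeal, Ideal.span_singleton_pow, Ideal.span_singleton_eq_bot, pow_two, inr_mul_inr]

theorem mem_epsIdeal_iff {t : R} {x : R[ε]} : x ∈ epsIdeal t ↔ x.fst = 0 ∧ t ∣ x.snd := by
  rw [epsIdeal, Ideal.mem_span_singleton']
  constructor
  · rintro ⟨c, rfl⟩
    exact ⟨by simp, ⟨c.fst, by simp [mul_comm]⟩⟩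
  · rintro ⟨hfst, c, hsnd⟩
    exact ⟨inl c, by ext <;> simp [hfst, hsnd, mul_comm]⟩

def quotFst (t : R) : R[ε] ⧸ epsIdeal t →ₐ[R] R :=
  Ideal.Quotient.liftₐ _ (fstHom R R R) fun _ hx => (mem_epsIdeal_iff.1 hx).1

@[simp]
theorem quotFst_mk (t : R) (x : R[ε]) : quotFst t (Ideal.Quotient.mk _ x) = x.fst := rfl

/-- `ε ↦ s`, well defined since `t ∣ s` gives `s² ∈ (ts)`. -/
def evalQuot (t s : R) (hts : t ∣ s) : R[ε] →ₐ[R] R ⧸ Ideal.span {t * s} :=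
  lift ⟨(Ideal.Quotient.mkₐ R _, Ideal.Quotient.mk _ s),
    by rw [← map_mul, Ideal.Quotient.eq_zero_iff_mem, Ideal.mem_span_singleton]
       exact mul_dvd_mul_right hts s,
    fun _ => Commute.all _ _⟩

theorem evalQuot_apply (t s : R) (hts : t ∣ s) (x : R[ε]) :
    evalQuot t s hts x = Ideal.Quotient.mk _ (x.fst + x.snd * s) := by
  rw [evalQuot, lift_apply_apply, Ideal.Quotient.mkₐ_eq_mk, map_add, map_mul]

def quotEval (t s : R) (hts : t ∣ s) : R[ε] ⧸ epsIdeal t →ₐ[R] R ⧸ Ideal.span {t * s} :=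
  Ideal.Quotient.liftₐ _ (evalQuot t s hts) fun x hx => by
    obtain ⟨hfst, c, hc⟩ := mem_epsIdeal_iff.1 hx
    rw [evalQuot_apply, hfst, hc, zero_add, Ideal.Quotient.eq_zero_iff_mem,
      Ideal.mem_span_singleton]
    exact ⟨c, by ring⟩

@[simp]
theorem quotEval_mk (t s : R) (hts : t ∣ s) (x : R[ε]) :
    quotEval t s hts (Ideal.Quotient.mk _ x) = Ideal.Quotient.mk _ (x.fst + x.snd * s) :=
  evalQuot_apply t s hts x

theorem eq_zero_of_quotFst_eq_zero_of_quotEval_eq_zero {t s : R} (hts : t ∣ s)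
    (hs : IsRightRegular s) {x : R[ε] ⧸ epsIdeal t} (hfst : quotFst t x = 0)
    (heval : quotEval t s hts x = 0) : x = 0 := by
  obtain ⟨x, rfl⟩ := Ideal.Quotient.mk_surjective x
  rw [quotFst_mk] at hfst
  rw [quotEval_mk, hfst, zero_add, Ideal.Quotient.eq_zero_iff_mem,
    Ideal.mem_span_singleton] at heval
  obtain ⟨c, hc⟩ := heval
  refine Ideal.Quotient.eq_zero_iff_mem.2 (mem_epsIdeal_iff.2 ⟨hfst, c, hs ?_⟩)
  simp only [hc]
  ring

theorem eps_smul_mul_eps_smul [Fintype n] (x y : Matrix n n R[ε]) :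
    ((ε : R[ε]) • x) * ((ε : R[ε]) • y) = 0 := by
  rw [Matrix.smul_mul, Matrix.mul_smul, smul_smul, eps_mul_eps, zero_smul]

variable [DecidableEq n]

theorem fst_one_add_eps_smul_apply (y : Matrix n n R) (i j : n) :
    ((1 + (ε : R[ε]) • y.map (algebraMap R R[ε])) i j).fst = (1 : Matrix n n R) i j := by
  by_cases hij : i = j <;> simp [Matrix.one_apply, hij, algebraMap_eq_inl]

theorem snd_one_add_eps_smul_apply (y : Matrix n n R) (i j : n) :
    ((1 + (ε : R[ε]) • y.map (algebraMap R R[ε])) i j).snd = y i j := by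
  by_cases hij : i = j <;> simp [hij, algebraMap_eq_inl]

variable [Fintype n]

def oneAddEpsGL (y : Matrix n n R) : GL n R[ε] where
  val := 1 + ε • y.map (algebraMap R R[ε])
  inv := 1 - ε • y.map (algebraMap R R[ε])
  val_inv := by rw [add_mul, one_mul, mul_sub, mul_one, eps_smul_mul_eps_smul]; abel
  inv_val := by rw [sub_mul, one_mul, mul_add, mul_one, eps_smul_mul_eps_smul]; abel

theorem mapGL_quotFst_oneAddEpsGL (t : R) (y : Matrix n n R) :
    GeneralLinearGroup.map (quotFst t : R[ε] ⧸ epsIdeal t →+* R)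
      (GeneralLinearGroup.map (S := _ ⧸ epsIdeal t) (Ideal.Quotient.mk (epsIdeal t))
        (oneAddEpsGL y)) = 1 := by
  ext i j
  exact fst_one_add_eps_smul_apply y i j

theorem coe_mapGL_quotEval_oneAddEpsGL {t s : R} (hts : t ∣ s) (y : Matrix n n R) :
    (GeneralLinearGroup.map (quotEval t s hts : R[ε] ⧸ epsIdeal t →+* R ⧸ Ideal.span {t * s})
      (GeneralLinearGroup.map (S := _ ⧸ epsIdeal t) (Ideal.Quotient.mk (epsIdeal t))
        (oneAddEpsGL y)) :
        Matrix n n (R ⧸ Ideal.span {t * s})) =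
      (1 + s • y : Matrix n n R).map (Ideal.Quotient.mk _) := by
  ext i j
  change quotEval t s hts (Ideal.Quotient.mk _ _) = _
  rw [quotEval_mk, oneAddEpsGL, fst_one_add_eps_smul_apply, snd_one_add_eps_smul_apply]
  simp [mul_comm]

theorem exists_eq_one_add_eps_smul_of_map_mk_eq {t : R} {M : Matrix n n R[ε]}
    {y : Matrix n n R}
    (h : M.map (Ideal.Quotient.mk (epsIdeal t)) =
      (oneAddEpsGL y : Matrix n n R[ε]).map (Ideal.Quotient.mk (epsIdeal t))) :
    ∃ c : Matrix n n R, M = 1 + (ε : R[ε]) • (y + t • c).map (algebraMap R R[ε]) := by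
  have hmem i j : M i j - (oneAddEpsGL y : Matrix n n R[ε]) i j ∈ epsIdeal t :=
    Ideal.Quotient.eq.1 (congrFun₂ h i j)
  choose hfst c hc using fun i j => mem_epsIdeal_iff.1 (hmem i j)
  refine ⟨Matrix.of c, Matrix.ext fun i j => TrivSqZeroExt.ext ?_ ?_⟩
  · have := hfst i j
    rw [fst_sub, oneAddEpsGL, fst_one_add_eps_smul_apply, sub_eq_zero] at this
    rw [this, fst_one_add_eps_smul_apply]
  · have := hc i j
    rw [snd_sub, oneAddEpsGL, snd_one_add_eps_smul_apply, sub_eq_iff_eq_add'] at this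
    rw [this, snd_one_add_eps_smul_apply]
    rfl

end DualNumber

namespace ClosedSubgroupGL

variable {p : ℕ} [Fact p.Prime] {k : Type} [CommRing k] {r : ℕ} (H : ClosedSubgroupGL p k r)
  {A B C : Type} [CommRing A] [CommRing B] [CommRing C] [Algebra (WittVector p k) A]
  [Algebra (WittVector p k) B] [Algebra (WittVector p k) C]

def coords (g : GL (Fin r) A) : (Fin r × Fin r) ⊕ (Fin r × Fin r) → A :=
  Sum.elim (fun ij => (g : Matrix (Fin r) (Fin r) A) ij.1 ij.2)
    (fun ij => ((g⁻¹ : GL (Fin r) A) : Matrix (Fin r) (Fin r) A) ij.1 ij.2)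

theorem aeval_coords_map (φ : A →ₐ[WittVector p k] B) (g : GL (Fin r) A)
    (f : MvPolynomial ((Fin r × Fin r) ⊕ (Fin r × Fin r)) (WittVector p k)) :
    aeval (coords (GeneralLinearGroup.map (φ : A →+* B) g)) f =
      φ (aeval (coords g) f) := by
  rw [comp_aeval_apply]
  congr 2 with x
  cases x <;> rfl

theorem exists_mem_pts_iff :
    ∃ T : Set (MvPolynomial ((Fin r × Fin r) ⊕ (Fin r × Fin r)) (WittVector p k)),
      ∀ (S : Type) [CommRing S] [Algebra (WittVector p k) S] (g : GL (Fin r) S),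
      g ∈ H.pts S ↔ ∀ f ∈ T, aeval (coords g) f = 0 :=
  H.closed

theorem map_mem_pts (φ : A →ₐ[WittVector p k] B) {g : GL (Fin r) A}
    (hg : g ∈ H.pts A) : GeneralLinearGroup.map (φ : A →+* B) g ∈ H.pts B := by
  obtain ⟨T, hT⟩ := H.exists_mem_pts_iff
  refine (hT B _).2 fun f hf => ?_
  rw [aeval_coords_map, (hT A g).1 hg f hf, map_zero]

theorem mem_pts_of_map_mem_pts (φ : A →ₐ[WittVector p k] B) (ψ : A →ₐ[WittVector p k] C)
    (hφψ : ∀ x, φ x = 0 → ψ x = 0 → x = 0) {g : GL (Fin r) A}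
    (hφ : GeneralLinearGroup.map (φ : A →+* B) g ∈ H.pts B)
    (hψ : GeneralLinearGroup.map (ψ : A →+* C) g ∈ H.pts C) :
    g ∈ H.pts A := by
  obtain ⟨T, hT⟩ := H.exists_mem_pts_iff
  refine (hT A g).2 fun f hf => hφψ _ ?_ ?_
  · rw [← aeval_coords_map]
    exact (hT B _).1 hφ f hf
  · rw [← aeval_coords_map]
    exact (hT C _).1 hψ f hf

end ClosedSubgroupGL

theorem stmt2_general (p : ℕ) [Fact p.Prime] (k : Type) [Field k] [CharP k p]
    (r : ℕ) (H : ClosedSubgroupGL p k r) (hsmooth : IsSmoothGS p k r H)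
    (l : ℕ)
    (g : (Matrix (Fin r) (Fin r) (WittVector p k))ˣ) (hg : g ∈ H.pts (WittVector p k))
    (hcong : ∃ y : Matrix (Fin r) (Fin r) (WittVector p k),
      (g : Matrix (Fin r) (Fin r) (WittVector p k)) = 1 + ((p : WittVector p k) ^ l) • y) :
    ∀ i : ℕ, 1 ≤ i → i ≤ l →
      ∃ z ∈ LieGS p k r H, ∃ w : Matrix (Fin r) (Fin r) (WittVector p k),
        (g : Matrix (Fin r) (Fin r) (WittVector p k)) =
          1 + ((p : WittVector p k) ^ l) • z + ((p : WittVector p k) ^ (i + l)) • w := by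
  intro i _ hil
  obtain ⟨y, hy⟩ := hcong
  set t := (p : WittVector p k) ^ i
  set s := (p : WittVector p k) ^ l
  have hts : t ∣ s := pow_dvd_pow _ hil
  have hs : IsRightRegular s :=
    (IsRegular.of_ne_zero (pow_ne_zero _ (WittVector.p_nonzero p k))).right
  have hv : GeneralLinearGroup.map (S := _ ⧸ epsIdeal t) (Ideal.Quotient.mk (epsIdeal t))
      (oneAddEpsGL y) ∈ H.pts ((WittVector p k)[ε] ⧸ epsIdeal t) := by
    refine H.mem_pts_of_map_mem_pts (quotFst t) (quotEval t s hts)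
      (fun _ => eq_zero_of_quotFst_eq_zero_of_quotEval_eq_zero hts hs) ?_ ?_
    · rw [mapGL_quotFst_oneAddEpsGL]
      exact H.one_mem _
    · convert H.map_mem_pts (Ideal.Quotient.mkₐ (WittVector p k) (Ideal.span {t * s})) hg
        using 1
      exact Units.ext ((coe_mapGL_quotEval_oneAddEpsGL hts y).trans (by rw [← hy]; rfl))
  obtain ⟨u, hu, huv⟩ := hsmooth _ _ (epsIdeal_sq t) _ hv
  obtain ⟨c, hc⟩ := exists_eq_one_add_eps_smul_of_map_mk_eq (congrArg Units.val huv)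
  refine ⟨y + t • c, ⟨u, hc, hu⟩, -c, ?_⟩
  rw [hy, pow_add]
  module

/-- Let `H` be a smooth affine group scheme over `Spec W(k)` with a closed
embedding `H ↪ GL(O)`, `O` free of finite rank.  If `g ∈ H(W(k))` is congruent to `1_O`
modulo `p^l`, then for every `i ∈ {1,…,l}` there exists `z ∈ Lie(H)` such that `g` is
congruent to `1_O + p^l z` modulo `p^{i+l}`. -/
theorem stmt2 (p : ℕ) [Fact p.Prime] (k : Type) [Field k] [CharP k p] [PerfectRing k p]
    (r : ℕ) (H : ClosedSubgroupGL p k r) (hsmooth : IsSmoothGS p k r H)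
    (l : ℕ) (hl : 1 ≤ l)
    (g : (Matrix (Fin r) (Fin r) (WittVector p k))ˣ) (hg : g ∈ H.pts (WittVector p k))
    (hcong : ∃ y : Matrix (Fin r) (Fin r) (WittVector p k),
      (g : Matrix (Fin r) (Fin r) (WittVector p k)) = 1 + ((p : WittVector p k) ^ l) • y) :
    ∀ i : ℕ, 1 ≤ i → i ≤ l →
      ∃ z ∈ LieGS p k r H, ∃ w : Matrix (Fin r) (Fin r) (WittVector p k),
        (g : Matrix (Fin r) (Fin r) (WittVector p k)) =
          1 + ((p : WittVector p k) ^ l) • z + ((p : WittVector p k) ^ (i + l)) • w :=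
  stmt2_general p k r H hsmooth l g hg hcong
end
end

section
/- Let H be a smooth affine group scheme over Spec(W(k)), closed in GL(O) for O a free W(k)-module of finite rank. If l ∈ ℕ and z ∈ Lie(H), then the reduction modulo p^{2l} of 1_O + p^l·z belongs to H(W_{2l}(k)), i.e. the image of H(W(k)) → GL(O)(W_{2l}(k)) contains 1_O + p^l·z mod p^{2l}. -/
noncomputable section

/-!
The functor `S ↦ H(S)` is represented by the `W(k)`-algebra `H.CoordRing` of polynomials in the
entries of `g` and `g⁻¹` modulo everything vanishing on `H`, and smoothness of `H` says exactly
that `H.CoordRing` is formally smooth. Since `z ∈ Lie(H)`, `1 + εz` is a point of `H` over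
`W(k)[ε]`; sending `ε ↦ p^l` gives the point `1 + p^l z` over `W(k)/p^{2l}`. As `W(k)` is
`p`-adically, hence `p^{2l}`-adically, complete, formal smoothness lifts this point to `H(W(k))`.
-/

section AdicPow

variable {R M : Type*} [CommRing R] [AddCommGroup M] [Module R M] {I : Ideal R} {n : ℕ}

theorem Submodule.pow_pow_smul_top_le (hn : n ≠ 0) (m : ℕ) :
    ((I ^ n) ^ m • ⊤ : Submodule R M) ≤ I ^ m • ⊤ := by
  rw [← pow_mul]
  exact Submodule.pow_smul_top_le I M (Nat.le_mul_of_pos_left m (Nat.pos_of_ne_zero hn))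

theorem IsHausdorff.pow [IsHausdorff I M] (hn : n ≠ 0) : IsHausdorff (I ^ n) M :=
  ⟨fun x hx => IsHausdorff.haus ‹_› x fun m => (hx m).mono (Submodule.pow_pow_smul_top_le hn m)⟩

theorem IsPrecomplete.pow [IsPrecomplete I M] (hn : n ≠ 0) : IsPrecomplete (I ^ n) M := by
  refine ⟨fun f hf => ?_⟩
  obtain ⟨L, hL⟩ := IsPrecomplete.prec ‹_› (f := f) fun hmn =>
    (hf hmn).mono (Submodule.pow_pow_smul_top_le hn _)
  refine ⟨L, fun m => (hf (Nat.le_mul_of_pos_left m (Nat.pos_of_ne_zero hn))).trans ?_⟩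
  rw [← pow_mul]
  exact hL (n * m)

theorem IsAdicComplete.pow [IsAdicComplete I M] (hn : n ≠ 0) : IsAdicComplete (I ^ n) M :=
  { IsHausdorff.pow hn, IsPrecomplete.pow hn with }

end AdicPow

theorem Matrix.exists_eq_add_smul_of_map_mk_eq {m n R : Type*} [CommRing R] {a : R}
    {M N : Matrix m n R}
    (h : M.map (Ideal.Quotient.mk (Ideal.span {a})) = N.map (Ideal.Quotient.mk _)) :
    ∃ w, M = N + a • w := by
  have hentry : ∀ i j, ∃ c, M i j = N i j + a * c := fun i j => by
    obtain ⟨c, hc⟩ :=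
      Ideal.mem_span_singleton.mp (Ideal.Quotient.eq.mp (congrFun (congrFun h i) j))
    exact ⟨c, by rw [← hc]; ring⟩
  choose w hw using hentry
  exact ⟨Matrix.of w, by ext i j; simp [hw]⟩

def DualNumber.liftQuotient {R : Type*} [CommRing R] (I : Ideal R) (a : R) (ha : a ^ 2 ∈ I) :
    DualNumber R →ₐ[R] R ⧸ I :=
  DualNumber.lift ⟨(Algebra.ofId _ _, Ideal.Quotient.mk I a),
    by rw [← map_mul, ← sq, Ideal.Quotient.eq_zero_iff_mem]; exact ha,
    fun _ => Commute.all _ _⟩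

theorem DualNumber.map_liftQuotient_one_add_eps_smul {R : Type*} [CommRing R] {n : Type*}
    [Fintype n] [DecidableEq n] (I : Ideal R) (a : R) (ha : a ^ 2 ∈ I) (z : Matrix n n R) :
    (1 + (DualNumber.eps : DualNumber R) • z.map (algebraMap R (DualNumber R))).map
      (DualNumber.liftQuotient I a ha) = (1 + a • z).map (Ideal.Quotient.mk I) := by
  ext i j
  simp [DualNumber.liftQuotient, Matrix.one_apply, apply_ite]

namespace ClosedSubgroupGL

section GenericMatrix

variable {r : ℕ}

abbrev Coords (r : ℕ) : Type := (Fin r × Fin r) ⊕ (Fin r × Fin r)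

def unitCoords {S : Type} [CommRing S] (g : (Matrix (Fin r) (Fin r) S)ˣ) : Coords r → S :=
  Sum.elim (fun ij => (g : Matrix (Fin r) (Fin r) S) ij.1 ij.2)
    (fun ij => ((g⁻¹ : (Matrix (Fin r) (Fin r) S)ˣ) : Matrix (Fin r) (Fin r) S) ij.1 ij.2)

def genericMatrix (R : Type*) [CommRing R] (r : ℕ) :
    Matrix (Fin r) (Fin r) (MvPolynomial (Coords r) R) :=
  Matrix.of fun i j => MvPolynomial.X (Sum.inl (i, j))

def genericInv (R : Type*) [CommRing R] (r : ℕ) :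
    Matrix (Fin r) (Fin r) (MvPolynomial (Coords r) R) :=
  Matrix.of fun i j => MvPolynomial.X (Sum.inr (i, j))

variable {R : Type*} {S : Type} [CommRing R] [CommRing S] [Algebra R S]

theorem map_genericMatrix (g : (Matrix (Fin r) (Fin r) S)ˣ) :
    (genericMatrix R r).map (MvPolynomial.aeval (unitCoords g)) = g := by
  ext i j
  simp [genericMatrix, unitCoords]

theorem map_genericInv (g : (Matrix (Fin r) (Fin r) S)ˣ) :
    (genericInv R r).map (MvPolynomial.aeval (unitCoords g)) = ↑g⁻¹ := by
  ext i j
  simp [genericInv, unitCoords]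

end GenericMatrix

variable {p : ℕ} [Fact p.Prime] {k : Type} [CommRing k] {r : ℕ} (H : ClosedSubgroupGL p k r)

local notation "W" => WittVector p k

theorem mem_pts_iff {S : Type} [CommRing S] [Algebra W S] (g : (Matrix (Fin r) (Fin r) S)ˣ) :
    g ∈ H.pts S ↔ ∀ f ∈ H.closed.choose, MvPolynomial.aeval (unitCoords g) f = 0 :=
  H.closed.choose_spec S g

def vanishingIdeal : Ideal (MvPolynomial (Coords r) W) :=
  Ideal.span {f | ∀ (S : Type) [CommRing S] [Algebra W S], ∀ g ∈ H.pts S,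
    MvPolynomial.aeval (unitCoords g) f = 0}

/-- `H(S)` is in natural bijection with `H.CoordRing →ₐ[W(k)] S`, via `toHom` and `ofHom`. -/
abbrev CoordRing : Type := MvPolynomial (Coords r) W ⧸ H.vanishingIdeal

def toHom {S : Type} [CommRing S] [Algebra W S] {g : (Matrix (Fin r) (Fin r) S)ˣ}
    (hg : g ∈ H.pts S) : H.CoordRing →ₐ[W] S :=
  Ideal.Quotient.liftₐ _ (MvPolynomial.aeval (unitCoords g)) fun _ hf =>
    RingHom.mem_ker.mp <| (Ideal.span_le.mpr fun _ hf' => hf' S g hg :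
      H.vanishingIdeal ≤ RingHom.ker (MvPolynomial.aeval (unitCoords g))) hf

theorem toHom_comp_mkₐ {S : Type} [CommRing S] [Algebra W S] {g : (Matrix (Fin r) (Fin r) S)ˣ}
    (hg : g ∈ H.pts S) :
    (H.toHom hg).comp (Ideal.Quotient.mkₐ W _) = MvPolynomial.aeval (unitCoords g) :=
  Ideal.Quotient.liftₐ_comp _ _ _

theorem genericMatrix_mul_genericInv_sub_one_mem (i j : Fin r) :
    (genericMatrix W r * genericInv W r - 1) i j ∈ H.vanishingIdeal := by
  refine Ideal.subset_span fun S _ _ g _ => ?_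
  have h : (MvPolynomial.aeval (unitCoords g)).mapMatrix
      (genericMatrix W r * genericInv W r - 1) = 0 := by
    rw [map_sub, map_mul, map_one, AlgHom.mapMatrix_apply, AlgHom.mapMatrix_apply,
      map_genericMatrix, map_genericInv, Units.mul_inv, sub_self]
  exact congrFun (congrFun h i) j

theorem genericInv_mul_genericMatrix_sub_one_mem (i j : Fin r) :
    (genericInv W r * genericMatrix W r - 1) i j ∈ H.vanishingIdeal := by
  refine Ideal.subset_span fun S _ _ g _ => ?_
  have h : (MvPolynomial.aeval (unitCoords g)).mapMatrix
      (genericInv W r * genericMatrix W r - 1) = 0 := by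
    rw [map_sub, map_mul, map_one, AlgHom.mapMatrix_apply, AlgHom.mapMatrix_apply,
      map_genericMatrix, map_genericInv, Units.inv_mul, sub_self]
  exact congrFun (congrFun h i) j

section OfHom

variable {H} {S : Type} [CommRing S] [Algebra (WittVector p k) S]

theorem mapMatrix_comp_mkₐ_eq_zero (φ : H.CoordRing →ₐ[W] S)
    {A : Matrix (Fin r) (Fin r) (MvPolynomial (Coords r) W)}
    (hA : ∀ i j, A i j ∈ H.vanishingIdeal) :
    (φ.comp (Ideal.Quotient.mkₐ W _)).mapMatrix A = 0 := by
  ext i j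
  simp [Ideal.Quotient.eq_zero_iff_mem.mpr (hA i j)]

def ofHom (φ : H.CoordRing →ₐ[W] S) : (Matrix (Fin r) (Fin r) S)ˣ where
  val := (φ.comp (Ideal.Quotient.mkₐ W _)).mapMatrix (genericMatrix W r)
  inv := (φ.comp (Ideal.Quotient.mkₐ W _)).mapMatrix (genericInv W r)
  val_inv := by
    rw [← map_mul, ← sub_eq_zero, ← map_one (φ.comp (Ideal.Quotient.mkₐ W _)).mapMatrix,
      ← map_sub]
    exact mapMatrix_comp_mkₐ_eq_zero φ H.genericMatrix_mul_genericInv_sub_one_mem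
  inv_val := by
    rw [← map_mul, ← sub_eq_zero, ← map_one (φ.comp (Ideal.Quotient.mkₐ W _)).mapMatrix,
      ← map_sub]
    exact mapMatrix_comp_mkₐ_eq_zero φ H.genericInv_mul_genericMatrix_sub_one_mem

theorem unitCoords_ofHom (φ : H.CoordRing →ₐ[W] S) :
    unitCoords (ofHom φ) = φ ∘ Ideal.Quotient.mk _ ∘ MvPolynomial.X := by
  funext ij
  rcases ij with ij | ij <;> rfl

theorem aeval_unitCoords_ofHom (φ : H.CoordRing →ₐ[W] S) :
    MvPolynomial.aeval (unitCoords (ofHom φ)) = φ.comp (Ideal.Quotient.mkₐ W _) := by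
  ext v
  simp [unitCoords_ofHom]

theorem ofHom_mem (φ : H.CoordRing →ₐ[W] S) : ofHom φ ∈ H.pts S := by
  refine (H.mem_pts_iff _).mpr fun f hf => ?_
  have hf' : f ∈ H.vanishingIdeal :=
    Ideal.subset_span fun S _ _ g hg => (H.mem_pts_iff g).mp hg f hf
  rw [aeval_unitCoords_ofHom, AlgHom.comp_apply, Ideal.Quotient.mkₐ_eq_mk,
    Ideal.Quotient.eq_zero_iff_mem.mpr hf', map_zero]

theorem ofHom_toHom {g : (Matrix (Fin r) (Fin r) S)ˣ} (hg : g ∈ H.pts S) :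
    ofHom (H.toHom hg) = g := by
  ext : 1
  change ((H.toHom hg).comp (Ideal.Quotient.mkₐ W _)).mapMatrix (genericMatrix W r) = _
  rw [toHom_comp_mkₐ, AlgHom.mapMatrix_apply, map_genericMatrix]

theorem ofHom_comp {S' : Type} [CommRing S'] [Algebra W S'] (ψ : S →ₐ[W] S')
    (φ : H.CoordRing →ₐ[W] S) :
    ofHom (ψ.comp φ) = Units.map (ψ : S →+* S').mapMatrix.toMonoidHom (ofHom φ) :=
  Units.ext rfl

theorem ofHom_injective : Function.Injective (ofHom : (H.CoordRing →ₐ[W] S) → _) := by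
  intro φ ψ h
  refine Ideal.Quotient.algHom_ext _ (MvPolynomial.algHom_ext fun v => ?_)
  simpa [unitCoords_ofHom] using congrFun (congrArg unitCoords h) v

end OfHom

theorem mem_pts_map {S S' : Type} [CommRing S] [Algebra W S] [CommRing S'] [Algebra W S']
    (ψ : S →ₐ[W] S') {g : (Matrix (Fin r) (Fin r) S)ˣ} (hg : g ∈ H.pts S) :
    Units.map (ψ : S →+* S').mapMatrix.toMonoidHom g ∈ H.pts S' := by
  rw [← ofHom_toHom hg, ← ofHom_comp]
  exact ofHom_mem _

theorem formallySmooth_coordRing (hs : IsSmoothGS p k r H) :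
    Algebra.FormallySmooth W H.CoordRing := by
  refine .of_comp_surjective fun B _ _ I hI f => ?_
  obtain ⟨g, hg, hgf⟩ := hs B I hI (ofHom f) (ofHom_mem f)
  refine ⟨H.toHom hg, ofHom_injective ?_⟩
  rw [ofHom_comp, ofHom_toHom]
  exact hgf

theorem exists_lift_of_isAdicComplete (hs : IsSmoothGS p k r H) {S : Type} [CommRing S]
    [Algebra W S] (I : Ideal S) [IsAdicComplete I S] {g : (Matrix (Fin r) (Fin r) (S ⧸ I))ˣ}
    (hg : g ∈ H.pts (S ⧸ I)) :
    ∃ h ∈ H.pts S, Units.map (Ideal.Quotient.mk I).mapMatrix.toMonoidHom h = g := by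
  have := H.formallySmooth_coordRing hs
  obtain ⟨φ, hφ⟩ := Algebra.FormallySmooth.exists_mkₐ_comp_eq_of_isAdicComplete (H.toHom hg)
  refine ⟨ofHom φ, ofHom_mem φ, ?_⟩
  rw [← ofHom_toHom hg, ← hφ, ofHom_comp]
  rfl

end ClosedSubgroupGL

/-- Let `H` be a smooth affine group scheme over `Spec W(k)`, closed in `GL(O)`
for `O` free of finite rank.  If `l ∈ ℕ` and `z ∈ Lie(H)`, then the reduction of
`1_O + p^l z` modulo `p^{2l}` belongs to `H(W_{2l}(k))`: the image of `H(W(k))` in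
`GL(O)(W_{2l}(k))` contains `1_O + p^l z mod p^{2l}`, i.e. there are `h ∈ H(W(k))` and `w`
with `h = 1 + p^l z + p^{2l} w`. -/
theorem stmt3 (p : ℕ) [Fact p.Prime] (k : Type) [Field k] [CharP k p] [PerfectRing k p]
    (r : ℕ) (H : ClosedSubgroupGL p k r) (hsmooth : IsSmoothGS p k r H)
    (l : ℕ) (hl : 1 ≤ l)
    (z : Matrix (Fin r) (Fin r) (WittVector p k)) (hz : z ∈ LieGS p k r H) :
    ∃ h : (Matrix (Fin r) (Fin r) (WittVector p k))ˣ, h ∈ H.pts (WittVector p k) ∧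
      ∃ w : Matrix (Fin r) (Fin r) (WittVector p k),
        (h : Matrix (Fin r) (Fin r) (WittVector p k)) =
          1 + ((p : WittVector p k) ^ l) • z + ((p : WittVector p k) ^ (2 * l)) • w := by
  obtain ⟨u, hu, hu_mem⟩ := hz
  have : IsAdicComplete (Ideal.span {(p : WittVector p k) ^ (2 * l)}) (WittVector p k) := by
    rw [← Ideal.span_singleton_pow]
    exact IsAdicComplete.pow (by omega)
  have hsq : ((p : WittVector p k) ^ l) ^ 2 ∈ Ideal.span {(p : WittVector p k) ^ (2 * l)} := by
    rw [← pow_mul, mul_comm]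
    exact Ideal.mem_span_singleton_self _
  obtain ⟨h, hh, hmap⟩ := H.exists_lift_of_isAdicComplete hsmooth _
    (H.mem_pts_map (DualNumber.liftQuotient _ _ hsq) hu_mem)
  refine ⟨h, hh, Matrix.exists_eq_add_smul_of_map_mk_eq ?_⟩
  have := congrArg Units.val hmap
  rw [Units.coe_map, Units.coe_map, hu] at this
  exact this.trans (DualNumber.map_liftQuotient_one_add_eps_smul _ _ hsq z)
end
end

section
/- Let k be a separably closed field of characteristic p. Consider the circular system of equations b_j·x_j + c_j − d_j·x_{j−1}^p = 0 for j ∈ {1,...,q} (indices mod q) with coefficients b_j, c_j, d_j ∈ k satisfying: b_j = 1 for all j and d_j ∈ {0,1} for all j. Then the system has a solution (x_1,...,x_q) ∈ k^q. -/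
/-!
Solve the equations one after another starting from an unknown value `t = x₀`:
`x_j = d_j x_{j-1}^p - c_j` for `j = 1, …, q`. Since the Frobenius map is additive, each step
keeps the shape `e t^(p^n) + a`, so the cyclic system has a solution as soon as
`t = e t^(p^q) + a` for the resulting `e, a`. The polynomial `e X^(p^q) - X + a` has derivative
`-1`, hence is separable, and has a root in the separably closed field `k`.
-/

section CyclicRecurrence

variable {α : Type*} {q : ℕ} (f : ZMod q → α → α)

/-- The values `x₀ = t, x₁, x₂, …` forced by the equations `x_j = f j (x_{j-1})`, with the
indices read in `ℕ` rather than in `ZMod q`. -/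
def cyclicOrbit (t : α) : ℕ → α
  | 0 => t
  | n + 1 => f (n + 1) (cyclicOrbit t n)

variable {f}

theorem cyclicOrbit_periodic {t : α} (h : cyclicOrbit f t q = t) :
    Function.Periodic (cyclicOrbit f t) q := by
  intro n
  induction n with
  | zero => rw [zero_add]; exact h
  | succ n ih =>
    rw [Nat.add_right_comm, cyclicOrbit, cyclicOrbit, ih]
    push_cast
    rw [ZMod.natCast_self, add_zero]

theorem exists_cyclic_solution_of_cyclicOrbit_eq [NeZero q] {t : α}
    (h : cyclicOrbit f t q = t) : ∃ x : ZMod q → α, ∀ j, x j = f j (x (j - 1)) := by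
  refine ⟨fun j => cyclicOrbit f t j.val, fun j => ?_⟩
  have hj : (((j - 1).val + 1 : ℕ) : ZMod q) = j := by
    push_cast
    rw [ZMod.natCast_zmod_val, sub_add_cancel]
  calc cyclicOrbit f t j.val
      = cyclicOrbit f t ((j - 1).val + 1) := by
        rw [← (cyclicOrbit_periodic h).map_mod_nat ((j - 1).val + 1), ← ZMod.val_natCast, hj]
    _ = f j (cyclicOrbit f t (j - 1).val) := by
        rw [cyclicOrbit]
        congr 1
        exact_mod_cast hj

end CyclicRecurrence

theorem exists_cyclicOrbit_frobenius_eq {k : Type*} [CommRing k] (p : ℕ) [ExpChar k p] {q : ℕ}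
    (c d : ZMod q → k) (n : ℕ) :
    ∃ e a : k, ∀ t, cyclicOrbit (fun j y => d j * y ^ p - c j) t n = e * t ^ p ^ n + a := by
  induction n with
  | zero => exact ⟨1, 0, fun t => by simp [cyclicOrbit]⟩
  | succ n ih =>
    obtain ⟨e, a, he⟩ := ih
    refine ⟨d (n + 1) * e ^ p, d (n + 1) * a ^ p - c (n + 1), fun t => ?_⟩
    rw [cyclicOrbit, he, add_pow_expChar, mul_pow, ← pow_mul, ← pow_succ]
    ring

theorem stmt7_general (p : ℕ) (hp : p.Prime) (k : Type) [Field k] [IsSepClosed k] [CharP k p]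
    (q : ℕ) [NeZero q] (c d : ZMod q → k) :
    ∃ x : ZMod q → k, ∀ j : ZMod q, x j + c j - d j * (x (j - 1)) ^ p = 0 := by
  have : Fact p.Prime := ⟨hp⟩
  obtain ⟨e, a, horbit⟩ := exists_cyclicOrbit_frobenius_eq p c d q
  obtain ⟨t, ht⟩ : ∃ t : k, e * t ^ p ^ q + -1 * t + a = 0 :=
    IsSepClosed.exists_root_C_mul_X_pow_add_C_mul_X_add_C' p (p ^ q) e (-1) a
      (dvd_pow_self p (NeZero.ne q)) (hp.two_le.trans (Nat.le_self_pow (NeZero.ne q) p))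
      (by norm_num)
  obtain ⟨x, hx⟩ := exists_cyclic_solution_of_cyclicOrbit_eq
    (f := fun j y => d j * y ^ p - c j) (t := t) (by rw [horbit]; linear_combination ht)
  exact ⟨x, fun j => by linear_combination hx j⟩

/-- Over a separably closed field `k` of characteristic `p`, the circular system
`b_j x_j + c_j − d_j x_{j−1}^p = 0` (`j` cyclic mod `q`), with `b_j = 1` for all `j` and
`d_j ∈ {0,1}` for all `j`, has a solution in `k^q`. -/
theorem stmt7 (p : ℕ) (hp : p.Prime) (k : Type) [Field k] [IsSepClosed k] [CharP k p]
    (q : ℕ) [NeZero q] (c d : ZMod q → k) (hd : ∀ j, d j = 0 ∨ d j = 1) :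
    ∃ x : ZMod q → k, ∀ j : ZMod q, x j + c j - d j * (x (j - 1)) ^ p = 0 :=
  stmt7_general p hp k q c d
end

section
/- Let τ = (n_1, ..., n_{r}) ∈ ℤ^r and suppose M is a free W(k)-module with basis e_1,...,e_r and φ is a σ-linear automorphism of M[1/p] with φ(e_i) = p^{n_i}·e_{i+1} (indices mod r). Then the Dieudonné–Fontaine torsion T(M,φ) satisfies T(M,φ) ≤ |n_1| + |n_2| + ... + |n_r|; more precisely T(M,φ) ≤ S(τ) ≤ W(τ) ≤ Σ|n_i|, where S(τ) and W(τ) are the sign and value deviations of τ. -/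
/-!
Rescaling the basis to `f i = p ^ b i • e i` turns the exponents `n i` into
`n i + b i - b (i + 1)`, and `p ^ T • M ⊆ ⟨f⟩` as soon as every `b i ≤ T`. When `∑ n i ≥ 0`, let
`b t` be the largest deficit `-(n t + ⋯ + n (t + ℓ - 1))` of a window of length `ℓ < r` starting
at `t`: since the full window has nonnegative sum, all new exponents are nonnegative. Cutting a
window at the minimum of its partial sums makes all its suffix sums nonpositive without lowering
its deficit, so `b t ≤ 𝐒τ`. The case `∑ n i ≤ 0` is the previous one applied to `-n`, with `b`
replaced by `𝐒τ - b`. Each deficit is at most the sum of the negative entries, whence `𝐒τ ≤ 𝐖τ`.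
-/

open Pointwise

noncomputable section

/-- `W(k)[1/p]`. -/
abbrev Wp (p : ℕ) [Fact p.Prime] (k : Type) [CommRing k] : Type :=
  Localization.Away (p : WittVector p k)

/-- `p` as a unit of `W(k)[1/p]`. -/
noncomputable def pUnit (p : ℕ) [Fact p.Prime] (k : Type) [CommRing k] : (Wp p k)ˣ :=
  (IsLocalization.map_units (M := Submonoid.powers ((p : WittVector p k))) (Wp p k)
    ⟨_, Submonoid.mem_powers _⟩).unit

/-- The standard lattice `W(k)^r ⊆ (W(k)[1/p])^r`. -/
noncomputable def stdLat (p : ℕ) [Fact p.Prime] (k : Type) [CommRing k] (r : ℕ) :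
    Submodule (WittVector p k) (Fin r → Wp p k) :=
  Submodule.span (WittVector p k) (Set.range fun i : Fin r => Pi.single i (1 : Wp p k))

/-- `M₁` is (the image of) a Dieudonné–Fontaine `p`-divisible object: it is spanned by a
linearly independent family `f` with `φ (f i) = p^{m i} • f (π i)` for a permutation `π`,
such that on every cycle of `π` the exponents `m i` are all nonnegative or all nonpositive. -/
def DFLattice (p : ℕ) [Fact p.Prime] (k : Type) [CommRing k] (r : ℕ)
    (φ : (Fin r → Wp p k) → (Fin r → Wp p k))
    (M₁ : Submodule (WittVector p k) (Fin r → Wp p k)) : Prop :=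
  ∃ (f : Fin r → (Fin r → Wp p k)) (π : Equiv.Perm (Fin r)) (m : Fin r → ℤ),
    Submodule.span (WittVector p k) (Set.range f) = M₁ ∧
    LinearIndependent (WittVector p k) f ∧
    (∀ i, φ (f i) = ((pUnit p k ^ (m i) : (Wp p k)ˣ) : Wp p k) • f (π i)) ∧
    (∀ i j, π.SameCycle i j → ((0 ≤ m i ∧ 0 ≤ m j) ∨ (m i ≤ 0 ∧ m j ≤ 0)))

/-- The set of `T` such that some Dieudonné–Fontaine sublattice `M₁ ⊆ M` satisfies
`p^T M ⊆ M₁`; the Dieudonné–Fontaine torsion `𝐓(M,φ)` is its infimum. -/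
def DFTorsionSet (p : ℕ) [Fact p.Prime] (k : Type) [CommRing k] (r : ℕ)
    (φ : (Fin r → Wp p k) → (Fin r → Wp p k)) : Set ℕ :=
  {T : ℕ | ∃ M₁ : Submodule (WittVector p k) (Fin r → Wp p k),
    DFLattice p k r φ M₁ ∧ M₁ ≤ stdLat p k r ∧
    ∀ x ∈ stdLat p k r, ((p : WittVector p k) ^ T) • x ∈ M₁}

/-- The cyclic extension of `n : Fin r → ℤ` to `ℕ`. -/
def nper (r : ℕ) (hr : 0 < r) (n : Fin r → ℤ) : ℕ → ℤ :=
  fun i => n ⟨i % r, Nat.mod_lt i hr⟩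

/-- The nonnegative sign deviation of `τ = (n 0, …, n (r-1))` (used when `Σ n i ≥ 0`):
`max {0, −Σ_{i=t}^{u} n i}` over cyclic windows `(t,u)` all of whose suffix sums are `≤ 0`. -/
def signDevNonneg (r : ℕ) (hr : 0 < r) (n : Fin r → ℤ) : ℤ :=
  sSup (insert 0 {z : ℤ | ∃ t u : ℕ, 1 ≤ t ∧ t ≤ r ∧ t ≤ u ∧ u ≤ r + t - 1 ∧
    (∀ v : ℕ, t ≤ v → v ≤ u → (∑ i ∈ Finset.Icc v u, nper r hr n i) ≤ 0) ∧
    z = -(∑ i ∈ Finset.Icc t u, nper r hr n i)})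

/-- The nonpositive sign deviation (used when `Σ n i ≤ 0`). -/
def signDevNonpos (r : ℕ) (hr : 0 < r) (n : Fin r → ℤ) : ℤ :=
  sSup (insert 0 {z : ℤ | ∃ t u : ℕ, 1 ≤ t ∧ t ≤ r ∧ t ≤ u ∧ u ≤ r + t - 1 ∧
    (∀ v : ℕ, t ≤ v → v ≤ u → 0 ≤ (∑ i ∈ Finset.Icc v u, nper r hr n i)) ∧
    z = (∑ i ∈ Finset.Icc t u, nper r hr n i)})

/-- The sign deviation `𝐒τ`. -/
def signDev (r : ℕ) (hr : 0 < r) (n : Fin r → ℤ) : ℤ :=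
  if 0 < ∑ i, n i then signDevNonneg r hr n
  else if ∑ i, n i < 0 then signDevNonpos r hr n
  else min (signDevNonneg r hr n) (signDevNonpos r hr n)

/-- The value deviation `𝐖τ`: for nonnegative (resp. nonpositive) total sum, the absolute
value of the sum of the nonpositive (resp. nonnegative) entries; the minimum if the sum is 0. -/
def valueDev (r : ℕ) (n : Fin r → ℤ) : ℤ :=
  if 0 < ∑ i, n i then ∑ i, max 0 (-(n i))
  else if ∑ i, n i < 0 then ∑ i, max 0 (n i)
  else min (∑ i, max 0 (-(n i))) (∑ i, max 0 (n i))

open Finset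
open scoped Fin.NatCast

namespace Fin

variable {r : ℕ} [NeZero r]

def windowSum {M : Type*} [AddCommMonoid M] (g : Fin r → M) (t : Fin r) (ℓ : ℕ) : M :=
  ∑ k ∈ range ℓ, g (t + (k : Fin r))

section AddCommMonoid

variable {M : Type*} [AddCommMonoid M] (g : Fin r → M)

@[simp]
lemma windowSum_zero (t : Fin r) : windowSum g t 0 = 0 := rfl

lemma windowSum_add (t : Fin r) (a b : ℕ) :
    windowSum g t (a + b) = windowSum g t a + windowSum g (t + (a : Fin r)) b := by
  simp only [windowSum, sum_range_add, Nat.cast_add, add_assoc]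

lemma windowSum_succ (t : Fin r) (ℓ : ℕ) :
    windowSum g t (ℓ + 1) = g t + windowSum g (t + 1) ℓ := by
  rw [add_comm, windowSum_add]
  simp [windowSum]

lemma windowSum_eq_sum_univ (t : Fin r) : windowSum g t r = ∑ i, g i := by
  rw [windowSum, ← Fin.sum_univ_eq_sum_range (fun k => g (t + (k : Fin r)))]
  simp only [Fin.cast_val_eq_self]
  exact Equiv.sum_comp (Equiv.addLeft t) g

end AddCommMonoid

lemma windowSum_neg {G : Type*} [AddCommGroup G] (g : Fin r → G) (t : Fin r) (ℓ : ℕ) :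
    windowSum (-g) t ℓ = -windowSum g t ℓ := by
  simp [windowSum, sum_neg_distrib]

lemma windowSum_le_sum {M : Type*} [AddCommMonoid M] [PartialOrder M] [IsOrderedAddMonoid M]
    {g : Fin r → M} (hg : ∀ i, 0 ≤ g i) (t : Fin r) {ℓ : ℕ} (hℓ : ℓ ≤ r) :
    windowSum g t ℓ ≤ ∑ i, g i := by
  rw [← windowSum_eq_sum_univ g t]
  exact sum_le_sum_of_subset_of_nonneg (range_subset_range.2 hℓ) fun k _ _ => hg _

lemma exists_windowSum_suffix_nonpos {G : Type*} [AddCommGroup G] [LinearOrder G]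
    [IsOrderedAddMonoid G] (g : Fin r → G) (t : Fin r) (ℓ : ℕ) :
    ∃ ℓ₀ ≤ ℓ, windowSum g t ℓ₀ ≤ windowSum g t ℓ ∧
      ∀ a ≤ ℓ₀, windowSum g (t + (a : Fin r)) (ℓ₀ - a) ≤ 0 := by
  obtain ⟨ℓ₀, hℓ₀, hmin⟩ :=
    exists_min_image (range (ℓ + 1)) (windowSum g t) nonempty_range_add_one
  have hℓ₀ℓ : ℓ₀ ≤ ℓ := Nat.lt_succ_iff.1 (mem_range.1 hℓ₀)
  refine ⟨ℓ₀, hℓ₀ℓ, hmin ℓ (self_mem_range_succ ℓ), fun a ha => ?_⟩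
  have hprefix := hmin a (mem_range.2 (by omega))
  rw [← Nat.add_sub_cancel' ha, windowSum_add] at hprefix
  simpa using hprefix

lemma exists_natCast_eq (t : Fin r) : ∃ t' : ℕ, 1 ≤ t' ∧ t' ≤ r ∧ (t' : Fin r) = t := by
  rcases eq_or_ne (t : ℕ) 0 with h | h
  · exact ⟨r, Nat.pos_of_neZero r, le_rfl, by rw [Fin.natCast_self]; exact (Fin.ext h).symm⟩
  · exact ⟨t, Nat.one_le_iff_ne_zero.2 h, t.isLt.le, Fin.cast_val_eq_self t⟩

variable (n : Fin r → ℤ)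

def maxDeficit (t : Fin r) : ℕ :=
  (range r).sup fun ℓ => (-windowSum n t ℓ).toNat

lemma neg_windowSum_le_maxDeficit (t : Fin r) {ℓ : ℕ} (hℓ : ℓ < r) :
    -windowSum n t ℓ ≤ maxDeficit n t :=
  (Int.self_le_toNat _).trans <| Int.ofNat_le.2 <|
    le_sup (f := fun ℓ => (-windowSum n t ℓ).toNat) (mem_range.2 hℓ)

lemma maxDeficit_le (t : Fin r) {c : ℤ} (hc : ∀ ℓ < r, -windowSum n t ℓ ≤ c) :
    (maxDeficit n t : ℤ) ≤ c := by
  have hc₀ : 0 ≤ c := by simpa using hc 0 (Nat.pos_of_neZero r)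
  rw [← Int.toNat_of_nonneg hc₀, Int.ofNat_le]
  exact Finset.sup_le fun ℓ hℓ => Int.toNat_le_toNat (hc ℓ (mem_range.1 hℓ))

lemma maxDeficit_add_one_le (hsum : 0 ≤ ∑ i, n i) (t : Fin r) :
    (maxDeficit n (t + 1) : ℤ) ≤ maxDeficit n t + n t := by
  refine maxDeficit_le n (t + 1) fun ℓ hℓ => ?_
  have hsucc := windowSum_succ n t ℓ
  rcases Nat.lt_or_ge (ℓ + 1) r with hlt | hge
  · linarith [neg_windowSum_le_maxDeficit n t hlt]
  · rw [show ℓ + 1 = r by omega, windowSum_eq_sum_univ] at hsucc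
    linarith [Int.natCast_nonneg (maxDeficit n t)]

lemma exists_potential_of_sum_nonneg (hsum : 0 ≤ ∑ i, n i) {D : ℤ}
    (hD : ∀ t, ∀ ℓ < r, -windowSum n t ℓ ≤ D) :
    ∃ b : Fin r → ℕ, (∀ i, (b i : ℤ) ≤ D) ∧ ∀ i, 0 ≤ n i + b i - b (i + 1) :=
  ⟨maxDeficit n, fun i => maxDeficit_le n i (hD i),
    fun i => by linarith [maxDeficit_add_one_le n hsum i]⟩

lemma exists_potential_of_sum_nonpos (hsum : ∑ i, n i ≤ 0) {D : ℤ}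
    (hD : ∀ t, ∀ ℓ < r, windowSum n t ℓ ≤ D) :
    ∃ b : Fin r → ℕ, (∀ i, (b i : ℤ) ≤ D) ∧ ∀ i, n i + b i - b (i + 1) ≤ 0 := by
  obtain ⟨c, hcD, hc⟩ := exists_potential_of_sum_nonneg (-n)
    (by simpa [sum_neg_distrib] using hsum) (D := D) fun t ℓ hℓ => by
      simpa [windowSum_neg] using hD t ℓ hℓ
  have hcast : ∀ i, (((D - c i).toNat : ℕ) : ℤ) = D - c i := fun i => by
    have := hcD i
    omega
  refine ⟨fun i => (D - c i).toNat, fun i => ?_, fun i => ?_⟩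
  · rw [hcast]
    linarith [Int.natCast_nonneg (c i)]
  · have := hc i
    simp only [Pi.neg_apply] at this
    rw [hcast, hcast]
    linarith

end Fin

section SignDeviation

variable {r : ℕ} (hr : 0 < r) (n : Fin r → ℤ)

lemma signDevNonpos_eq_signDevNonneg_neg : signDevNonpos r hr n = signDevNonneg r hr (-n) := by
  simp only [signDevNonpos, signDevNonneg, nper, Pi.neg_apply, sum_neg_distrib, neg_nonpos,
    neg_neg]

lemma valueDev_le_sum_abs : valueDev r n ≤ ∑ i, |n i| := by
  have hneg : ∑ i, max 0 (-n i) ≤ ∑ i, |n i| :=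
    sum_le_sum fun i _ => max_le (abs_nonneg _) (neg_le_abs _)
  have hpos : ∑ i, max 0 (n i) ≤ ∑ i, |n i| :=
    sum_le_sum fun i _ => max_le (abs_nonneg _) (le_abs_self _)
  unfold valueDev
  split_ifs
  · exact hneg
  · exact hpos
  · exact (min_le_left _ _).trans hneg

def signDevNonnegWindows (r : ℕ) (hr : 0 < r) (n : Fin r → ℤ) : Set ℤ :=
  {z : ℤ | ∃ t u : ℕ, 1 ≤ t ∧ t ≤ r ∧ t ≤ u ∧ u ≤ r + t - 1 ∧
    (∀ v : ℕ, t ≤ v → v ≤ u → (∑ i ∈ Finset.Icc v u, nper r hr n i) ≤ 0) ∧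
    z = -(∑ i ∈ Finset.Icc t u, nper r hr n i)}

variable [NeZero r]

lemma nper_apply (i : ℕ) : nper r hr n i = n i := rfl

lemma sum_Icc_nper_eq_windowSum (v u : ℕ) :
    ∑ i ∈ Icc v u, nper r hr n i = Fin.windowSum n v (u + 1 - v) := by
  rw [← Ico_add_one_right_eq_Icc, sum_Ico_eq_sum_range]
  simp [Fin.windowSum, nper_apply, Nat.cast_add]

lemma neg_windowSum_le_sum_max (t : Fin r) {ℓ : ℕ} (hℓ : ℓ ≤ r) :
    -Fin.windowSum n t ℓ ≤ ∑ i, max 0 (-n i) :=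
  calc -Fin.windowSum n t ℓ = Fin.windowSum (-n) t ℓ := (Fin.windowSum_neg n t ℓ).symm
    _ ≤ Fin.windowSum (fun i => max 0 (-n i)) t ℓ := sum_le_sum fun _ _ => le_max_right 0 _
    _ ≤ ∑ i, max 0 (-n i) := Fin.windowSum_le_sum (fun i => le_max_left 0 (-n i)) t hℓ

lemma exists_windowSum_of_mem_signDevNonnegWindows {z : ℤ}
    (hz : z ∈ signDevNonnegWindows r hr n) : ∃ t : Fin r, ∃ ℓ ≤ r, z = -Fin.windowSum n t ℓ := by
  obtain ⟨t, u, -, -, -, hu, -, rfl⟩ := hz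
  exact ⟨t, u + 1 - t, by omega, by rw [sum_Icc_nper_eq_windowSum]⟩

lemma neg_windowSum_mem_signDevNonnegWindows (t : Fin r) {ℓ : ℕ} (hℓ₀ : 1 ≤ ℓ) (hℓ : ℓ ≤ r)
    (hsuffix : ∀ a < ℓ, Fin.windowSum n (t + a) (ℓ - a) ≤ 0) :
    -Fin.windowSum n t ℓ ∈ signDevNonnegWindows r hr n := by
  obtain ⟨t', ht'₀, ht'r, rfl⟩ := Fin.exists_natCast_eq t
  refine ⟨t', t' + ℓ - 1, ht'₀, ht'r, by omega, by omega, fun v hv hvu => ?_, ?_⟩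
  · obtain ⟨a, rfl⟩ := Nat.exists_eq_add_of_le hv
    rw [sum_Icc_nper_eq_windowSum, Nat.cast_add, show t' + ℓ - 1 + 1 - (t' + a) = ℓ - a by omega]
    exact hsuffix a (by omega)
  · rw [sum_Icc_nper_eq_windowSum, show t' + ℓ - 1 + 1 - t' = ℓ by omega]

lemma signDevNonneg_le {c : ℤ} (hc : ∀ t, ∀ ℓ ≤ r, -Fin.windowSum n t ℓ ≤ c) :
    signDevNonneg r hr n ≤ c := by
  refine csSup_le (Set.insert_nonempty _ _) (Set.forall_mem_insert.2 ⟨?_, fun z hz => ?_⟩)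
  · simpa using hc 0 0 (Nat.zero_le r)
  · obtain ⟨t, ℓ, hℓ, rfl⟩ := exists_windowSum_of_mem_signDevNonnegWindows hr n hz
    exact hc t ℓ hℓ

lemma signDevNonneg_le_sum_max : signDevNonneg r hr n ≤ ∑ i, max 0 (-n i) :=
  signDevNonneg_le hr n fun t _ hℓ => neg_windowSum_le_sum_max n t hℓ

lemma bddAbove_signDevNonnegWindows : BddAbove (insert 0 (signDevNonnegWindows r hr n)) := by
  refine ⟨∑ i, max 0 (-n i), Set.forall_mem_insert.2 ⟨sum_nonneg fun _ _ => le_max_left _ _,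
    fun z hz => ?_⟩⟩
  obtain ⟨t, ℓ, hℓ, rfl⟩ := exists_windowSum_of_mem_signDevNonnegWindows hr n hz
  exact neg_windowSum_le_sum_max n t hℓ

lemma signDevNonneg_nonneg : 0 ≤ signDevNonneg r hr n :=
  le_csSup (bddAbove_signDevNonnegWindows hr n) (Set.mem_insert _ _)

lemma neg_windowSum_le_signDevNonneg (t : Fin r) {ℓ : ℕ} (hℓ : ℓ ≤ r) :
    -Fin.windowSum n t ℓ ≤ signDevNonneg r hr n := by
  obtain ⟨ℓ₀, hℓ₀, hle, hsuffix⟩ := Fin.exists_windowSum_suffix_nonpos n t ℓ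
  rcases Nat.eq_zero_or_pos ℓ₀ with rfl | hpos
  · exact (neg_le_neg hle).trans (by simpa using signDevNonneg_nonneg hr n)
  · exact (neg_le_neg hle).trans (le_csSup (bddAbove_signDevNonnegWindows hr n)
      (Set.mem_insert_of_mem _ (neg_windowSum_mem_signDevNonnegWindows hr n t hpos
        (hℓ₀.trans hℓ) fun a ha => hsuffix a ha.le)))

lemma windowSum_le_signDevNonpos (t : Fin r) {ℓ : ℕ} (hℓ : ℓ ≤ r) :
    Fin.windowSum n t ℓ ≤ signDevNonpos r hr n := by
  simpa [signDevNonpos_eq_signDevNonneg_neg, Fin.windowSum_neg] using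
    neg_windowSum_le_signDevNonneg hr (-n) t hℓ

lemma signDevNonpos_le_sum_max : signDevNonpos r hr n ≤ ∑ i, max 0 (n i) := by
  simpa [signDevNonpos_eq_signDevNonneg_neg] using signDevNonneg_le_sum_max hr (-n)

lemma signDev_le_valueDev : signDev r hr n ≤ valueDev r n := by
  unfold signDev valueDev
  split_ifs
  · exact signDevNonneg_le_sum_max hr n
  · exact signDevNonpos_le_sum_max hr n
  · exact min_le_min (signDevNonneg_le_sum_max hr n) (signDevNonpos_le_sum_max hr n)

end SignDeviation

section ScaledBasis

variable (p : ℕ) [Fact p.Prime] (k : Type) [CommRing k] {r : ℕ}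

lemma pUnit_zpow_natCast (a : ℕ) :
    ((pUnit p k ^ (a : ℤ) : (Wp p k)ˣ) : Wp p k)
      = algebraMap (WittVector p k) (Wp p k) ((p : WittVector p k) ^ a) := by
  rw [zpow_natCast, Units.val_pow_eq_pow_val, map_pow, pUnit, IsUnit.unit_spec]

def scaledBasis (b : Fin r → ℕ) : Fin r → Fin r → Wp p k :=
  fun i => ((p : WittVector p k) ^ b i) • Pi.single i 1

lemma scaledBasis_eq_pUnit_zpow_smul (b : Fin r → ℕ) (i : Fin r) :
    scaledBasis p k b i = ((pUnit p k ^ (b i : ℤ) : (Wp p k)ˣ) : Wp p k) • Pi.single i 1 := by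
  rw [pUnit_zpow_natCast, algebraMap_smul]
  rfl

lemma span_scaledBasis_le_stdLat (b : Fin r → ℕ) :
    Submodule.span (WittVector p k) (Set.range (scaledBasis p k b)) ≤ stdLat p k r :=
  Submodule.span_le.2 <| Set.range_subset_iff.2 fun i =>
    Submodule.smul_mem _ _ (Submodule.subset_span ⟨i, rfl⟩)

lemma pow_smul_mem_span_scaledBasis (b : Fin r → ℕ) {T : ℕ} (hbT : ∀ i, b i ≤ T) :
    ∀ x ∈ stdLat p k r, ((p : WittVector p k) ^ T) • x
      ∈ Submodule.span (WittVector p k) (Set.range (scaledBasis p k b)) := by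
  have hle : stdLat p k r ≤ (Submodule.span (WittVector p k) (Set.range (scaledBasis p k b))).comap
      (((p : WittVector p k) ^ T) • LinearMap.id) := by
    refine Submodule.span_le.2 (Set.range_subset_iff.2 fun i => ?_)
    have hi : ((p : WittVector p k) ^ T) • (Pi.single i 1 : Fin r → Wp p k)
        = ((p : WittVector p k) ^ (T - b i)) • scaledBasis p k b i := by
      rw [scaledBasis, smul_smul, ← pow_add, Nat.sub_add_cancel (hbT i)]
    rw [SetLike.mem_coe, Submodule.mem_comap, LinearMap.smul_apply, LinearMap.id_apply, hi]
    exact Submodule.smul_mem _ _ (Submodule.subset_span ⟨i, rfl⟩)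
  exact fun x hx => hle hx

lemma map_scaledBasis [NeZero r] (n : Fin r → ℤ) (φ : (Fin r → Wp p k) → (Fin r → Wp p k))
    (hsemi : ∀ (c : WittVector p k) v, φ ((algebraMap (WittVector p k) (Wp p k) c) • v) =
      (algebraMap (WittVector p k) (Wp p k) (WittVector.frobenius c)) • φ v)
    (hbasis : ∀ i : Fin r, φ (Pi.single i (1 : Wp p k)) =
      ((pUnit p k ^ (n i) : (Wp p k)ˣ) : Wp p k) • Pi.single (i + 1) (1 : Wp p k))
    (b : Fin r → ℕ) (i : Fin r) :
    φ (scaledBasis p k b i) = ((pUnit p k ^ (n i + b i - b (i + 1)) : (Wp p k)ˣ) : Wp p k) •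
      scaledBasis p k b (i + 1) := by
  rw [scaledBasis, ← algebraMap_smul (Wp p k), hsemi, map_pow, map_natCast, hbasis,
    ← pUnit_zpow_natCast, scaledBasis_eq_pUnit_zpow_smul, smul_smul, smul_smul, ← Units.val_mul,
    ← Units.val_mul, ← zpow_add, ← zpow_add, sub_add_cancel, add_comm]

end ScaledBasis

section Torsion

variable (p : ℕ) [Fact p.Prime] (k : Type) [Field k] [CharP k p] {r : ℕ}

lemma algebraMap_wittVector_injective :
    Function.Injective (algebraMap (WittVector p k) (Wp p k)) :=
  IsLocalization.injective (Wp p k)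
    (powers_le_nonZeroDivisors_of_noZeroDivisors (WittVector.irreducible p).ne_zero)

lemma linearIndependent_scaledBasis (b : Fin r → ℕ) :
    LinearIndependent (WittVector p k) (scaledBasis p k b) := by
  have h : LinearIndependent (Wp p k) (scaledBasis p k b) := by
    convert (Pi.basisFun (Wp p k) (Fin r)).linearIndependent.units_smul
      fun i => pUnit p k ^ (b i : ℤ) using 1
    ext i : 1
    simp [scaledBasis_eq_pUnit_zpow_smul, Units.smul_def]
  refine h.restrict_scalars fun x y hxy => algebraMap_wittVector_injective p k ?_
  simpa [Algebra.algebraMap_eq_smul_one] using hxy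

variable [NeZero r] (n : Fin r → ℤ) (φ : (Fin r → Wp p k) → (Fin r → Wp p k))

lemma mem_DFTorsionSet_of_potential
    (hsemi : ∀ (c : WittVector p k) v, φ ((algebraMap (WittVector p k) (Wp p k) c) • v) =
      (algebraMap (WittVector p k) (Wp p k) (WittVector.frobenius c)) • φ v)
    (hbasis : ∀ i : Fin r, φ (Pi.single i (1 : Wp p k)) =
      ((pUnit p k ^ (n i) : (Wp p k)ˣ) : Wp p k) • Pi.single (i + 1) (1 : Wp p k))
    (b : Fin r → ℕ) {T : ℕ} (hbT : ∀ i, b i ≤ T)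
    (hsign : (∀ i, 0 ≤ n i + b i - b (i + 1)) ∨ (∀ i, n i + b i - b (i + 1) ≤ 0)) :
    T ∈ DFTorsionSet p k r φ := by
  refine ⟨_, ⟨scaledBasis p k b, Equiv.addRight 1, fun i => n i + b i - b (i + 1), rfl,
    linearIndependent_scaledBasis p k b, map_scaledBasis p k n φ hsemi hbasis b, ?_⟩,
    span_scaledBasis_le_stdLat p k b, pow_smul_mem_span_scaledBasis p k b hbT⟩
  rintro i j -
  rcases hsign with h | h
  · exact Or.inl ⟨h i, h j⟩
  · exact Or.inr ⟨h i, h j⟩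

lemma sInf_DFTorsionSet_le_of_potential
    (hsemi : ∀ (c : WittVector p k) v, φ ((algebraMap (WittVector p k) (Wp p k) c) • v) =
      (algebraMap (WittVector p k) (Wp p k) (WittVector.frobenius c)) • φ v)
    (hbasis : ∀ i : Fin r, φ (Pi.single i (1 : Wp p k)) =
      ((pUnit p k ^ (n i) : (Wp p k)ˣ) : Wp p k) • Pi.single (i + 1) (1 : Wp p k))
    (b : Fin r → ℕ) {D : ℤ} (hbD : ∀ i, (b i : ℤ) ≤ D)
    (hsign : (∀ i, 0 ≤ n i + b i - b (i + 1)) ∨ (∀ i, n i + b i - b (i + 1) ≤ 0)) :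
    ((sInf (DFTorsionSet p k r φ) : ℕ) : ℤ) ≤ D := by
  have hD : 0 ≤ D := (Int.natCast_nonneg _).trans (hbD 0)
  have hmem := mem_DFTorsionSet_of_potential p k n φ hsemi hbasis b (T := D.toNat)
    (fun i => by have := hbD i; omega) hsign
  calc ((sInf (DFTorsionSet p k r φ) : ℕ) : ℤ) ≤ D.toNat := Int.ofNat_le.2 (Nat.sInf_le hmem)
    _ = D := Int.toNat_of_nonneg hD

end Torsion

theorem stmt9_general (p : ℕ) [Fact p.Prime] (k : Type) [Field k] [CharP k p]
    (r : ℕ) [NeZero r] (hr : 0 < r) (n : Fin r → ℤ)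
    (φ : (Fin r → Wp p k) → (Fin r → Wp p k))
    (hsemi : ∀ (c : WittVector p k) v, φ ((algebraMap (WittVector p k) (Wp p k) c) • v) =
      (algebraMap (WittVector p k) (Wp p k) (WittVector.frobenius c)) • φ v)
    (hbasis : ∀ i : Fin r, φ (Pi.single i (1 : Wp p k)) =
      ((pUnit p k ^ (n i) : (Wp p k)ˣ) : Wp p k) • Pi.single (i + 1) (1 : Wp p k)) :
    (((sInf (DFTorsionSet p k r φ) : ℕ) : ℤ) ≤ signDev r hr n) ∧
      signDev r hr n ≤ valueDev r n ∧
      valueDev r n ≤ ∑ i, |n i| := by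
  refine ⟨?_, signDev_le_valueDev hr n, valueDev_le_sum_abs n⟩
  have hT := sInf_DFTorsionSet_le_of_potential p k n φ hsemi hbasis
  have hnonneg (hsum : 0 ≤ ∑ i, n i) :
      ((sInf (DFTorsionSet p k r φ) : ℕ) : ℤ) ≤ signDevNonneg r hr n := by
    obtain ⟨b, hbD, hsign⟩ := Fin.exists_potential_of_sum_nonneg n hsum fun t ℓ hℓ =>
      neg_windowSum_le_signDevNonneg hr n t hℓ.le
    exact hT b hbD (Or.inl hsign)
  have hnonpos (hsum : ∑ i, n i ≤ 0) :
      ((sInf (DFTorsionSet p k r φ) : ℕ) : ℤ) ≤ signDevNonpos r hr n := by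
    obtain ⟨b, hbD, hsign⟩ := Fin.exists_potential_of_sum_nonpos n hsum fun t ℓ hℓ =>
      windowSum_le_signDevNonpos hr n t hℓ.le
    exact hT b hbD (Or.inr hsign)
  unfold signDev
  split_ifs with hpos hneg
  · exact hnonneg hpos.le
  · exact hnonpos hneg.le
  · exact le_min (hnonneg (not_lt.1 hneg)) (hnonpos (not_lt.1 hpos))

/-- If `(M,φ)` over an algebraically closed field `k` of characteristic `p` has a
`W(k)`-basis `e_1, …, e_r` with `φ(e_i) = p^{n_i} e_{i+1}` (cyclically), then
`𝐓(M,φ) ≤ 𝐒τ ≤ 𝐖τ ≤ |n_1| + ⋯ + |n_r|`. -/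
theorem stmt9 (p : ℕ) [Fact p.Prime] (k : Type) [Field k] [CharP k p] [IsAlgClosed k]
    (r : ℕ) [NeZero r] (hr : 0 < r) (n : Fin r → ℤ)
    (φ : (Fin r → Wp p k) → (Fin r → Wp p k))
    (hadd : ∀ u v, φ (u + v) = φ u + φ v)
    (hsemi : ∀ (c : WittVector p k) v, φ ((algebraMap (WittVector p k) (Wp p k) c) • v) =
      (algebraMap (WittVector p k) (Wp p k) (WittVector.frobenius c)) • φ v)
    (hbij : Function.Bijective φ)
    (hbasis : ∀ i : Fin r, φ (Pi.single i (1 : Wp p k)) =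
      ((pUnit p k ^ (n i) : (Wp p k)ˣ) : Wp p k) • Pi.single (i + 1) (1 : Wp p k)) :
    (((sInf (DFTorsionSet p k r φ) : ℕ) : ℤ) ≤ signDev r hr n) ∧
      signDev r hr n ≤ valueDev r n ∧
      valueDev r n ≤ ∑ i, |n i| :=
  stmt9_general p k r hr n φ hsemi hbasis
end
end

section
/- Let (M,φ) be a latticed F-isocrystal over a perfect field k with s-number s and h-number h, and let (M*,φ) be its dual. Denote by s* and h* the s-number and h-number of (M*,φ). Then s* = max{0, h − s} and s = max{0, h* − s*}. Consequently, if s = 0 then s* = h and h* ∈ {0,1,...,h}, and if s > 0 then h* = max(s, h). -/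
/-!
Let `t` be the least exponent with `p^t M ⊆ φ(M)`. Since `p` acts injectively,
`p^h M ⊆ p^s φ(M)` forces `p^(h-s) M ⊆ φ(M)` (truncated subtraction), so `h - s = t`.
Since `⟨ψ f, φ x⟩ = σ ⟨f, x⟩` and `σ` preserves and reflects integrality, `p^n ψ(M) ⊆ M` iff
`p^n M ⊆ φ(M)`, so `s* = t = h - s`. The pairing is symmetric, so also `s = h* - s*`, and the
remaining assertions follow by arithmetic.
-/

open Pointwise

noncomputable section

/-- The Frobenius `σ` extended to `W(k)[1/p]`. -/
noncomputable def frobLoc (p : ℕ) [Fact p.Prime] (k : Type) [CommRing k] [CharP k p] :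
    Wp p k →+* Wp p k :=
  IsLocalization.Away.lift (S := Wp p k) (p : WittVector p k)
    (g := (algebraMap (WittVector p k) (Wp p k)).comp WittVector.frobenius)
    (by
      have h : ((algebraMap (WittVector p k) (Wp p k)).comp WittVector.frobenius)
          ((p : ℕ) : WittVector p k) =
            algebraMap (WittVector p k) (Wp p k) (p : WittVector p k) := by
        simp [map_natCast]
      rw [h]
      exact IsLocalization.map_units (M := Submonoid.powers ((p : WittVector p k))) (Wp p k)
        ⟨_, Submonoid.mem_powers _⟩)

/-- The `s`-number of `(M,φ)`: the smallest `s ≥ 0` with `φ(p^s M) ⊆ M`. -/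
noncomputable def sNum (p : ℕ) [Fact p.Prime] (k : Type) [CommRing k] (r : ℕ)
    (φ : (Fin r → Wp p k) → (Fin r → Wp p k)) : ℕ :=
  sInf {s : ℕ | ∀ x ∈ stdLat p k r, ((p : WittVector p k) ^ s) • φ x ∈ stdLat p k r}

/-- The `h`-number of `(M,φ)`: the smallest `h` with `p^h M ⊆ p^s φ(M)`
(equivalently `p^{h−s} M ⊆ φ(M)`). -/
noncomputable def hNum (p : ℕ) [Fact p.Prime] (k : Type) [CommRing k] (r : ℕ)
    (φ : (Fin r → Wp p k) → (Fin r → Wp p k)) : ℕ :=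
  sInf {h : ℕ | ∀ x ∈ stdLat p k r, ((p : WittVector p k) ^ h) • x ∈
    ((p : WittVector p k) ^ (sNum p k r φ)) •
      Submodule.span (WittVector p k) (φ '' (stdLat p k r))}


theorem pow_sub_smul_mem_of_pow_smul_mem_pow_smul {R V : Type*} [CommSemiring R]
    [AddCommMonoid V] [Module R V] {a : R} (ha : IsSMulRegular V a) {N : Submodule R V}
    {x : V} {h s : ℕ} (hx : a ^ h • x ∈ a ^ s • N) : a ^ (h - s) • x ∈ N := by
  obtain ⟨y, hy, hyx⟩ := (Submodule.mem_smul_pointwise_iff_exists _ _ _).1 hx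
  suffices a ^ (h - s) • x = a ^ (s - h) • y from this ▸ N.smul_mem _ hy
  apply (ha.pow s).eq_iff.1
  rw [smul_smul, ← pow_add, smul_comm, hyx, smul_smul, ← pow_add,
    show s + (h - s) = s - h + h by omega]

namespace Wp

variable (p : ℕ) [Fact p.Prime] (k : Type)

theorem isUnit_algebraMap_p [CommRing k] :
    IsUnit (algebraMap (WittVector p k) (Wp p k) p) :=
  IsLocalization.Away.algebraMap_isUnit _

theorem isSMulRegular_p [CommRing k] (r : ℕ) :
    IsSMulRegular (Fin r → Wp p k) (p : WittVector p k) := by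
  intro x y hxy
  funext i
  have := congrFun hxy i
  simp only [Pi.smul_apply, Algebra.smul_def] at this
  exact (isUnit_algebraMap_p p k).mul_left_cancel this

theorem algebraMap_injective [Field k] [CharP k p] :
    Function.Injective (algebraMap (WittVector p k) (Wp p k)) :=
  IsLocalization.injective _ (powers_le_nonZeroDivisors_of_noZeroDivisors
    (WittVector.irreducible p).ne_zero)

end Wp

section frobLoc

variable (p : ℕ) [Fact p.Prime] (k : Type) [Field k] [CharP k p]

theorem frobLoc_algebraMap (w : WittVector p k) :
    frobLoc p k (algebraMap _ _ w) = algebraMap _ _ (WittVector.frobenius w) :=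
  IsLocalization.Away.lift_eq _ _ _

variable [PerfectRing k p]

theorem frobLoc_injective : Function.Injective (frobLoc p k) := by
  refine (IsLocalization.lift_injective_iff _).2 fun x y => ?_
  simp only [RingHom.comp_apply, (Wp.algebraMap_injective p k).eq_iff,
    (WittVector.frobenius_bijective p k).injective.eq_iff]

theorem isInteger_frobLoc_iff {x : Wp p k} :
    IsLocalization.IsInteger (WittVector p k) (frobLoc p k x) ↔
      IsLocalization.IsInteger (WittVector p k) x := by
  constructor
  · rintro ⟨w, hw⟩
    obtain ⟨b, rfl⟩ := (WittVector.frobenius_bijective p k).surjective w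
    exact ⟨b, frobLoc_injective p k (by rw [frobLoc_algebraMap, hw])⟩
  · rintro ⟨w, rfl⟩
    exact ⟨_, (frobLoc_algebraMap p k w).symm⟩

end frobLoc

section stdLat

variable (p : ℕ) [Fact p.Prime] {k : Type} [CommRing k] {r : ℕ}

theorem mem_stdLat_iff {x : Fin r → Wp p k} :
    x ∈ stdLat p k r ↔ ∀ i, IsLocalization.IsInteger (WittVector p k) (x i) := by
  simp only [stdLat, Submodule.mem_span_range_iff_exists_fun, Algebra.smul_def, funext_iff,
    Finset.sum_apply, Pi.mul_apply, Pi.algebraMap_apply, Pi.single_apply, mul_ite, mul_one,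
    mul_zero, Finset.sum_ite_eq, Finset.mem_univ, ↓reduceIte, IsLocalization.IsInteger,
    RingHom.mem_rangeS, Classical.skolem (b := fun _ => WittVector p k)]

theorem single_mem_stdLat (i : Fin r) : Pi.single i 1 ∈ stdLat p k r :=
  Submodule.subset_span ⟨i, rfl⟩

theorem forall_mem_stdLat_smul_mem_iff {N : Submodule (WittVector p k) (Fin r → Wp p k)}
    {c : WittVector p k} :
    (∀ x ∈ stdLat p k r, c • x ∈ N) ↔ ∀ i, c • Pi.single i 1 ∈ N :=
  ⟨fun h i => h _ (single_mem_stdLat p i), fun h =>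
    show stdLat p k r ≤ N.comap (c • LinearMap.id) from
      Submodule.span_le.2 (Set.range_subset_iff.2 h)⟩

theorem isInteger_dotProduct {x y : Fin r → Wp p k} (hx : x ∈ stdLat p k r)
    (hy : y ∈ stdLat p k r) : IsLocalization.IsInteger (WittVector p k) (x ⬝ᵥ y) :=
  sum_mem fun i _ => mul_mem ((mem_stdLat_iff p).1 hx i) ((mem_stdLat_iff p).1 hy i)

theorem exists_pow_smul_mem_stdLat {ι : Type*} [Finite ι] (v : ι → Fin r → Wp p k) :
    ∃ t : ℕ, ∀ i, (p : WittVector p k) ^ t • v i ∈ stdLat p k r := by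
  obtain ⟨⟨_, t, rfl⟩, ht⟩ := IsLocalization.exist_integer_multiples_of_finite
    (Submonoid.powers (p : WittVector p k)) fun ij : ι × Fin r => v ij.1 ij.2
  exact ⟨t, fun i => (mem_stdLat_iff p).2 fun j => ht (i, j)⟩

end stdLat

instance WittVector.ringHomSurjective_frobenius (p : ℕ) [Fact p.Prime] (k : Type) [CommRing k]
    [CharP k p] [PerfectRing k p] :
    RingHomSurjective (WittVector.frobenius : WittVector p k →+* WittVector p k) :=
  ⟨(WittVector.frobenius_bijective p k).surjective⟩

/-- `{t | p^t M ⊆ φ(M)}`: its least element is both `h - s` and the `s`-number of the dual. -/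
def imageExponents (p : ℕ) [Fact p.Prime] (k : Type) [CommRing k] (r : ℕ)
    (φ : (Fin r → Wp p k) → (Fin r → Wp p k)) : Set ℕ :=
  {t : ℕ | ∀ x ∈ stdLat p k r, ((p : WittVector p k) ^ t) • x ∈
    Submodule.span (WittVector p k) (φ '' (stdLat p k r))}

theorem hNum_sub_sNum (p : ℕ) [Fact p.Prime] (k : Type) [CommRing k] (r : ℕ)
    (φ : (Fin r → Wp p k) → (Fin r → Wp p k)) (hne : (imageExponents p k r φ).Nonempty) :
    hNum p k r φ - sNum p k r φ = sInf (imageExponents p k r φ) := by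
  have sNum_add_mem {t : ℕ} (ht : t ∈ imageExponents p k r φ) :
      sNum p k r φ + t ∈ {h : ℕ | ∀ x ∈ stdLat p k r, ((p : WittVector p k) ^ h) • x ∈
        ((p : WittVector p k) ^ (sNum p k r φ)) •
          Submodule.span (WittVector p k) (φ '' (stdLat p k r))} := fun x hx => by
    rw [pow_add, mul_smul]
    exact Submodule.smul_mem_pointwise_smul _ _ _ (ht x hx)
  have hle : hNum p k r φ ≤ sNum p k r φ + sInf (imageExponents p k r φ) :=
    Nat.sInf_le (sNum_add_mem (Nat.sInf_mem hne))
  have hge : sInf (imageExponents p k r φ) ≤ hNum p k r φ - sNum p k r φ :=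
    Nat.sInf_le fun x hx => pow_sub_smul_mem_of_pow_smul_mem_pow_smul (Wp.isSMulRegular_p p k r)
      (Nat.sInf_mem ⟨_, sNum_add_mem (Nat.sInf_mem hne)⟩ x hx)
  omega

section semilinear

variable (p : ℕ) [Fact p.Prime] {k : Type} [CommRing k] {r : ℕ}
  (φ : (Fin r → Wp p k) →ₛₗ[(WittVector.frobenius : WittVector p k →+* WittVector p k)]
    (Fin r → Wp p k))

theorem map_pow_p_smul (n : ℕ) (x : Fin r → Wp p k) :
    φ ((p : WittVector p k) ^ n • x) = (p : WittVector p k) ^ n • φ x := by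
  rw [φ.map_smulₛₗ, map_pow, map_natCast]

variable [CharP k p] [PerfectRing k p]

theorem span_image_stdLat :
    Submodule.span (WittVector p k) (φ '' stdLat p k r) = (stdLat p k r).map φ := by
  rw [Submodule.span_image, Submodule.span_eq]

theorem imageExponents_nonempty (hφ : Function.Surjective φ) :
    (imageExponents p k r φ).Nonempty := by
  obtain ⟨t, ht⟩ := exists_pow_smul_mem_stdLat p fun i => Function.surjInv hφ (Pi.single i 1)
  refine ⟨t, (forall_mem_stdLat_smul_mem_iff p).2 fun i => ?_⟩
  rw [span_image_stdLat]
  exact ⟨_, ht i, by rw [map_pow_p_smul, Function.surjInv_eq hφ]⟩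

end semilinear

section dual

variable (p : ℕ) [Fact p.Prime] {k : Type} [Field k] [CharP k p] [PerfectRing k p] {r : ℕ}
  (φ : (Fin r → Wp p k) →ₛₗ[(WittVector.frobenius : WittVector p k →+* WittVector p k)]
    (Fin r → Wp p k))
  (ψ : (Fin r → Wp p k) → (Fin r → Wp p k))

theorem sNum_eq_sInf_imageExponents (hφ : Function.Surjective φ)
    (hdual : ∀ f x, ψ f ⬝ᵥ φ x = frobLoc p k (f ⬝ᵥ x)) :
    sNum p k r ψ = sInf (imageExponents p k r φ) := by
  refine congrArg sInf (Set.ext fun n => ⟨fun H x hx => ?_, fun H f hf => ?_⟩)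
  · obtain ⟨y, hy⟩ := hφ ((p : WittVector p k) ^ n • x)
    rw [span_image_stdLat]
    refine ⟨y, (mem_stdLat_iff p).2 fun j => ?_, hy⟩
    rw [← single_one_dotProduct j y, ← isInteger_frobLoc_iff, ← hdual, hy, dotProduct_smul,
      ← smul_dotProduct]
    exact isInteger_dotProduct p (H _ (single_mem_stdLat p j)) hx
  · refine (mem_stdLat_iff p).2 fun j => ?_
    obtain ⟨y, hy, hyj⟩ := Submodule.mem_map.1
      (span_image_stdLat p φ ▸ H _ (single_mem_stdLat p j))
    rw [← dotProduct_single_one ((p : WittVector p k) ^ n • ψ f) j, smul_dotProduct,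
      ← dotProduct_smul, ← hyj, hdual, isInteger_frobLoc_iff]
    exact isInteger_dotProduct p hf hy

theorem sNum_dual_eq_hNum_sub_sNum (hφ : Function.Surjective φ)
    (hdual : ∀ f x, ψ f ⬝ᵥ φ x = frobLoc p k (f ⬝ᵥ x)) :
    sNum p k r ψ = hNum p k r φ - sNum p k r φ := by
  rw [hNum_sub_sNum _ _ _ _ (imageExponents_nonempty p φ hφ),
    sNum_eq_sInf_imageExponents p φ ψ hφ hdual]

end dual

def frobSemilinearMap (p : ℕ) [Fact p.Prime] {k : Type} [CommRing k] {r : ℕ}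
    (φ : (Fin r → Wp p k) → (Fin r → Wp p k)) (hadd : ∀ u v, φ (u + v) = φ u + φ v)
    (hsemi : ∀ (c : WittVector p k) v, φ ((algebraMap (WittVector p k) (Wp p k) c) • v) =
      (algebraMap (WittVector p k) (Wp p k) (WittVector.frobenius c)) • φ v) :
    (Fin r → Wp p k) →ₛₗ[(WittVector.frobenius : WittVector p k →+* WittVector p k)]
      (Fin r → Wp p k) where
  toFun := φ
  map_add' := hadd
  map_smul' c v := by simpa only [algebraMap_smul] using hsemi c v

/-- Let `(M,φ)` be a latticed `F`-isocrystal over a perfect field `k` with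
`s`-number `s` and `h`-number `h`, and let `(M*,ψ)` be its dual (realized via the standard
perfect pairing `⟨f,x⟩ = Σ f_i x_i`, so that `⟨ψ f, φ x⟩ = σ⟨f,x⟩`).  Then, writing `s*`, `h*`
for the `s`- and `h`-numbers of the dual, we have `s* = max{0, h−s}` and
`s = max{0, h*−s*}` (with truncated subtraction); consequently if `s = 0` then `s* = h` and
`h* ≤ h`, and if `s > 0` then `h* = max(s,h)`. -/
theorem stmt11 (p : ℕ) [Fact p.Prime] (k : Type) [Field k] [CharP k p] [PerfectRing k p]
    (r : ℕ)
    (φ ψ : (Fin r → Wp p k) → (Fin r → Wp p k))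
    (hφadd : ∀ u v, φ (u + v) = φ u + φ v)
    (hφsemi : ∀ (c : WittVector p k) v, φ ((algebraMap (WittVector p k) (Wp p k) c) • v) =
      (algebraMap (WittVector p k) (Wp p k) (WittVector.frobenius c)) • φ v)
    (hφbij : Function.Bijective φ)
    (hψadd : ∀ u v, ψ (u + v) = ψ u + ψ v)
    (hψsemi : ∀ (c : WittVector p k) v, ψ ((algebraMap (WittVector p k) (Wp p k) c) • v) =
      (algebraMap (WittVector p k) (Wp p k) (WittVector.frobenius c)) • ψ v)
    (hψbij : Function.Bijective ψ)
    (hdual : ∀ f x : Fin r → Wp p k,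
      (∑ i, ψ f i * φ x i) = frobLoc p k (∑ i, f i * x i)) :
    sNum p k r ψ = hNum p k r φ - sNum p k r φ ∧
    sNum p k r φ = hNum p k r ψ - sNum p k r ψ ∧
    (sNum p k r φ = 0 → sNum p k r ψ = hNum p k r φ ∧ hNum p k r ψ ≤ hNum p k r φ) ∧
    (0 < sNum p k r φ → hNum p k r ψ = max (sNum p k r φ) (hNum p k r φ)) := by
  have hs : sNum p k r ψ = hNum p k r φ - sNum p k r φ :=
    sNum_dual_eq_hNum_sub_sNum p (frobSemilinearMap p φ hφadd hφsemi) ψ hφbij.2 hdual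
  have hs' : sNum p k r φ = hNum p k r ψ - sNum p k r ψ :=
    sNum_dual_eq_hNum_sub_sNum p (frobSemilinearMap p ψ hψadd hψsemi) φ hψbij.2 fun f x => by
      rw [dotProduct_comm, dotProduct_comm f]
      exact hdual x f
  omega
end
end

section
/- Let (M,φ) be a Dieudonné–Fontaine p-divisible object over a perfect field k with φ(M) ⊆ M, of rank r and h-number h. Set e = max{r, ⌊r²/4⌋}, let k₁ be the composite of k and F_{p^{r!}}, and let K ⊇ k be algebraically closed. Then every endomorphism of (M ⊗_{W(k)} W(K), φ ⊗ σ_K) is the scalar extension of an endomorphism of (M ⊗_{W(k)} W(k₁), φ ⊗ σ_{k₁}). -/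
noncomputable section

/-- The composite field `k₁` of `k` and `𝔽_{p^{r!}}` inside an algebraically closed
extension `K` of `k`. -/
noncomputable def compositeField (p : ℕ) (k K : Type) [Field k] [Field K] [Algebra k K]
    (r : ℕ) : Subfield K :=
  Subfield.closure (Set.range (algebraMap k K) ∪ {x : K | x ^ (p ^ (r.factorial)) = x})

/-- The base change to `W(K)` of a Dieudonné–Fontaine `p`-divisible object `(M,φ)` over `k`
given by `φ(e_i) = p^{m i} e_{π i}` (all `m i ≥ 0`, i.e. `φ(M) ⊆ M`). -/
noncomputable def phiDF (p : ℕ) [Fact p.Prime] (K : Type) [CommRing K] (r : ℕ)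
    (π : Equiv.Perm (Fin r)) (m : Fin r → ℕ) :
    (Fin r → WittVector p K) → (Fin r → WittVector p K) :=
  fun v j => ((p : WittVector p K) ^ (m (π.symm j))) * WittVector.frobenius (v (π.symm j))

/-!
Write `A i j` for the matrix entries of an endomorphism `f` in the basis `eᵢ`. Commuting with
`φ` says `p^{m j} A (π i) (π j) = p^{m i} σ(A i j)`; iterating this `r!` times, where `π^{r!} = 1`,
gives `p^a A i j = p^b σ^{r!}(A i j)`. Since `W(K)` is a discrete valuation ring with uniformizer
`p` and `σ` preserves valuations, `a = b`, so `A i j` is fixed by `σ^{r!}`: all its Witt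
coefficients lie in `𝔽_{p^{r!}} ⊆ k₁`.
-/

theorem IsDiscreteValuationRing.map_eq_self_of_pow_mul_eq_pow_mul {R : Type*} [CommRing R]
    [IsDomain R] [IsDiscreteValuationRing R] {ϖ : R} (hϖ : Irreducible ϖ) (σ : R →+* R)
    (hσϖ : σ ϖ = ϖ) {a b : ℕ} {x : R} (h : ϖ ^ a * x = ϖ ^ b * σ x) : σ x = x := by
  rcases eq_or_ne x 0 with rfl | hx
  · exact map_zero σ
  obtain ⟨n, u, rfl⟩ := eq_unit_mul_pow_irreducible hx hϖ
  have hσx : σ (u * ϖ ^ n) = (Units.map σ.toMonoidHom u : R) * ϖ ^ n := by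
    rw [map_mul, map_pow, hσϖ]; rfl
  rw [hσx] at h ⊢
  have hab : a + n = b + n := by
    refine unit_mul_pow_congr_pow hϖ hϖ u (Units.map σ.toMonoidHom u) _ _ ?_
    linear_combination h
  obtain rfl : a = b := by omega
  exact (mul_left_cancel₀ (pow_ne_zero a hϖ.ne_zero) h).symm

theorem pow_sum_mul_apply_pow_eq {R ι : Type*} [CommSemiring R] (σ : R →+* R) {c : R}
    (hσc : σ c = c) (π : Equiv.Perm ι) (m : ι → ℕ) (A : ι → ι → R)
    (hA : ∀ i j, c ^ m j * A (π i) (π j) = c ^ m i * σ (A i j)) (n : ℕ) (i j : ι) :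
    c ^ (∑ t ∈ Finset.range n, m ((π ^ t) j)) * A ((π ^ n) i) ((π ^ n) j)
      = c ^ (∑ t ∈ Finset.range n, m ((π ^ t) i)) * (σ ^ n) (A i j) := by
  induction n with
  | zero => simp
  | succ n ih =>
    have hσn : (σ ^ (n + 1)) (A i j) = σ ((σ ^ n) (A i j)) := by
      rw [pow_succ']; rfl
    rw [hσn]
    simp only [Finset.sum_range_succ, pow_add, pow_succ' π, Equiv.Perm.mul_apply]
    calc c ^ (∑ t ∈ Finset.range n, m ((π ^ t) j)) * c ^ m ((π ^ n) j)
          * A (π ((π ^ n) i)) (π ((π ^ n) j))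
        = c ^ m ((π ^ n) i) * σ (c ^ (∑ t ∈ Finset.range n, m ((π ^ t) j))
            * A ((π ^ n) i) ((π ^ n) j)) := by
          rw [mul_assoc, hA, map_mul, map_pow, hσc]; ring
      _ = _ := by rw [ih, map_mul, map_pow, hσc]; ring

theorem WittVector.coeff_pow_eq_self_of_iterate_frobenius_eq {p : ℕ} [Fact p.Prime]
    {R : Type*} [CommRing R] [CharP R p] {n : ℕ} {x : WittVector p R}
    (hx : WittVector.frobenius^[n] x = x) (k : ℕ) : x.coeff k ^ p ^ n = x.coeff k := by
  rw [← WittVector.iterate_frobenius_coeff, hx]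

theorem WittVector.mem_range_map_subtype {p : ℕ} [Fact p.Prime] {K : Type*} [Field K] (S : Subfield K)
    {x : WittVector p K} (hx : ∀ n, x.coeff n ∈ S) : x ∈ Set.range (WittVector.map S.subtype) :=
  ⟨WittVector.mk p fun n => ⟨x.coeff n, hx n⟩, by ext n; rw [WittVector.map_coeff]; rfl⟩

theorem phiDF_single (p : ℕ) [Fact p.Prime] (K : Type) [CommRing K] (r : ℕ)
    (π : Equiv.Perm (Fin r)) (m : Fin r → ℕ) (j : Fin r) :
    phiDF p K r π m (Pi.single j 1) = (p : WittVector p K) ^ m j • Pi.single (π j) 1 := by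
  funext i
  rcases eq_or_ne i (π j) with rfl | hi
  · simp [phiDF]
  · have : π.symm i ≠ j := fun h => hi (by rw [← h, Equiv.apply_symm_apply])
    simp [phiDF, Pi.single_eq_of_ne hi, this]

theorem pow_mul_apply_single_eq_of_commute_phiDF (p : ℕ) [Fact p.Prime] (K : Type) [CommRing K]
    (r : ℕ) (π : Equiv.Perm (Fin r)) (m : Fin r → ℕ)
    (f : (Fin r → WittVector p K) →ₗ[WittVector p K] (Fin r → WittVector p K))
    (hf : ∀ v, f (phiDF p K r π m v) = phiDF p K r π m (f v)) (i j : Fin r) :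
    (p : WittVector p K) ^ m j * f (Pi.single (π j) 1) (π i)
      = (p : WittVector p K) ^ m i * WittVector.frobenius (f (Pi.single j 1) i) := by
  have := congrFun (hf (Pi.single j 1)) (π i)
  rwa [phiDF_single, map_smul, Pi.smul_apply, smul_eq_mul, phiDF, Equiv.symm_apply_apply] at this

theorem stmt14_general (p : ℕ) [Fact p.Prime] (k K : Type) [Field k]
    [Field K] [CharP K p] [IsAlgClosed K] [Algebra k K]
    (r : ℕ) (π : Equiv.Perm (Fin r)) (m : Fin r → ℕ)
    (f : (Fin r → WittVector p K) →ₗ[WittVector p K] (Fin r → WittVector p K))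
    (hf : ∀ v, f (phiDF p K r π m v) = phiDF p K r π m (f v)) :
    ∀ i j : Fin r, f (Pi.single j (1 : WittVector p K)) i ∈
      Set.range (WittVector.map (compositeField p k K r).subtype) := by
  intro i j
  have hπ : π ^ r.factorial = 1 := by
    simpa [Fintype.card_perm] using pow_card_eq_one (x := π)
  have hrel := pow_sum_mul_apply_pow_eq WittVector.frobenius (map_natCast _ p) π m
    (fun i j => f (Pi.single j 1) i) (pow_mul_apply_single_eq_of_commute_phiDF p K r π m f hf)
    r.factorial i j
  simp only [hπ, Equiv.Perm.one_apply] at hrel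
  have hfix := IsDiscreteValuationRing.map_eq_self_of_pow_mul_eq_pow_mul
    (WittVector.irreducible p) _ (map_natCast _ p) hrel
  refine WittVector.mem_range_map_subtype _ fun n => Subfield.subset_closure (Or.inr ?_)
  exact WittVector.coeff_pow_eq_self_of_iterate_frobenius_eq hfix n

/-- Let `(M,φ)` be a Dieudonné–Fontaine `p`-divisible object over a perfect
field `k` with `φ(M) ⊆ M`, of rank `r` and `h`-number `h`, let `k₁` be the composite of `k`
and `𝔽_{p^{r!}}`, and let `K ⊇ k` be algebraically closed.  Then every endomorphism of
`(M ⊗_{W(k)} W(K), φ ⊗ σ_K)` is the scalar extension of an endomorphism over `W(k₁)`: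
all its matrix entries lie in the image of `W(k₁) → W(K)`. -/
theorem stmt14 (p : ℕ) [Fact p.Prime] (k K : Type) [Field k] [CharP k p] [PerfectRing k p]
    [Field K] [CharP K p] [IsAlgClosed K] [Algebra k K]
    (r : ℕ) (hr : 0 < r) (π : Equiv.Perm (Fin r)) (m : Fin r → ℕ) (h : ℕ)
    (hm : ∀ i, m i ≤ h)
    (f : (Fin r → WittVector p K) →ₗ[WittVector p K] (Fin r → WittVector p K))
    (hf : ∀ v, f (phiDF p K r π m v) = phiDF p K r π m (f v)) :
    ∀ i j : Fin r, f (Pi.single j (1 : WittVector p K)) i ∈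
      Set.range (WittVector.map (compositeField p k K r).subtype) :=
  stmt14_general p k K r π m f hf
end
end

section
/- Let d = 3, k algebraically closed of characteristic p, and for α ∈ W(k) let φ_α be the σ-linear endomorphism of M = W(k)^6 (basis e_1,...,e_6) sending (e_1,...,e_6) to (e_2, p·e_3, p·e_1, e_5, e_6 + α·e_1, p·e_4). Let α₁, α₂ ∈ W(k) \ {0} be such that the F_{p³}-subspace of k generated by α₁ mod p differs from the F_{p³}-subspace generated by α₂ mod p. Then the Dieudonné modules (M, φ_{α₁}) and (M, φ_{α₂}) are not isomorphic. -/
/-!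
Write an isomorphism as a matrix `G`. Since `φ_α v = A_α σ(v)` for an explicit matrix `A_α`,
the intertwining condition reads `G A_{α₁} = A_{α₂} σ(G)`. The matrix `A_α` is block upper
triangular, with diagonal blocks `T`, `U` satisfying `T³ = p²`, `U³ = p` (slopes `2/3`, `1/3`).
The lower-left block `B` of `G` satisfies `B T = U σ(B)`, hence `p² B = p σ³(B)`; comparing Witt
coefficients one at a time, `σ³(B) = p B` forces `B = 0`. The diagonal blocks `C`, `D` of `G`
then satisfy `C T = T σ(C)` and `D U = U σ(D)`, hence are fixed by `σ³`, so `a = G₀₀` and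
`c = G₃₃` (indices from `0`) reduce mod `p` into `𝔽_{p³}`. Modulo `p`, entry `(0, 4)` of the
intertwining equation reads `ᾱ₁ a = ᾱ₂ c^{p²}`, and `a, c ≠ 0` because the reduction of `G`
is invertible while a row through `c` and a column through `a^p` vanish elsewhere. Thus `ᾱ₁`
and `ᾱ₂` span the same `𝔽_{p³}`-line.
-/

noncomputable section

/-- For `α ∈ W(k)`, the `σ`-linear endomorphism `φ_α` of `M = W(k)^6` sending
`(e_1,…,e_6)` to `(e_2, p e_3, p e_1, e_5, e_6 + α e_1, p e_4)`. -/
noncomputable def phiAlpha (p : ℕ) [Fact p.Prime] (k : Type) [CommRing k]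
    (α : WittVector p k) : (Fin 6 → WittVector p k) → (Fin 6 → WittVector p k) :=
  fun v => ![(p : WittVector p k) * WittVector.frobenius (v 2) +
                α * WittVector.frobenius (v 4),
             WittVector.frobenius (v 0),
             (p : WittVector p k) * WittVector.frobenius (v 1),
             (p : WittVector p k) * WittVector.frobenius (v 5),
             WittVector.frobenius (v 3),
             WittVector.frobenius (v 4)]

namespace Matrix

variable {R : Type*} [CommRing R] {m n : Type*} [Fintype m] [Fintype n] [DecidableEq m]
  [DecidableEq n]

theorem mul_pow_eq_pow_mul_map_pow {σ : R →+* R} {T : Matrix n n R} {U : Matrix m m R}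
    (hT : T.map σ = T) (hU : U.map σ = U) (k : ℕ) :
    ∀ {B : Matrix m n R}, B * T = U * B.map σ → B * T ^ k = U ^ k * B.map ⇑(σ ^ k) := by
  induction k with
  | zero => simp
  | succ k ih =>
    intro B h
    have hσB : B.map σ * T = U * (B.map σ).map σ := by
      rw [← hT, ← hU, ← Matrix.map_mul, ← Matrix.map_mul, h]
    rw [pow_succ', ← Matrix.mul_assoc, h, Matrix.mul_assoc, ih hσB, map_map,
      ← Matrix.mul_assoc, ← pow_succ', pow_succ σ, RingHom.coe_mul]

theorem isUnit_apply_of_row {M : Matrix n n R} (hM : IsUnit M) {i j : n}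
    (h : ∀ l ≠ j, M i l = 0) : IsUnit (M i j) := by
  obtain ⟨N, hN⟩ := hM.exists_right_inv
  have hii := congrFun₂ hN i i
  rw [mul_apply, Finset.sum_eq_single j (fun l _ hl => by rw [h l hl, zero_mul]) (by simp),
    one_apply_eq] at hii
  exact IsUnit.of_mul_eq_one _ hii

theorem isUnit_apply_of_col {M : Matrix n n R} (hM : IsUnit M) {i j : n}
    (h : ∀ l ≠ i, M l j = 0) : IsUnit (M i j) :=
  isUnit_apply_of_row (M := Mᵀ) ((isUnit_transpose M).mpr hM) h

end Matrix

namespace WittVector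

variable {p : ℕ} [hp : Fact p.Prime] {k : Type*} [CommRing k] [CharP k p]

local notation "𝕎" => WittVector p

theorem constantCoeff_natCast_p : constantCoeff (p : 𝕎 k) = 0 :=
  coeff_p_zero p k

theorem constantCoeff_comp_frobenius :
    (constantCoeff : 𝕎 k →+* k).comp frobenius =
      (_root_.frobenius k p).comp constantCoeff := by
  ext x
  simp [coeff_frobenius_charP, frobenius_def]

theorem constantCoeff_iterate_frobenius (x : 𝕎 k) (n : ℕ) :
    constantCoeff (frobenius^[n] x) = constantCoeff x ^ p ^ n :=
  iterate_frobenius_coeff x n 0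

theorem constantCoeff_pow_eq_self_of_iterate_frobenius_eq {x : 𝕎 k} {n : ℕ}
    (h : frobenius^[n] x = x) : constantCoeff x ^ p ^ n = constantCoeff x := by
  rw [← constantCoeff_iterate_frobenius, h]

theorem natCast_p_ne_zero [Nontrivial k] : (p : 𝕎 k) ≠ 0 := fun h => by
  simpa [h] using coeff_p (p := p) (R := k) 1

theorem p_mul_coeff_zero (x : 𝕎 k) : ((p : 𝕎 k) * x).coeff 0 = 0 := by
  rw [mul_comm, ← verschiebung_frobenius, verschiebung_coeff_zero]

theorem p_mul_coeff_succ (x : 𝕎 k) (m : ℕ) :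
    ((p : 𝕎 k) * x).coeff (m + 1) = x.coeff m ^ p := by
  rw [mul_comm, ← verschiebung_frobenius, verschiebung_coeff_succ, coeff_frobenius_charP]

theorem eq_zero_of_iterate_frobenius_eq_p_mul [IsReduced k] {x : 𝕎 k} {n : ℕ}
    (h : frobenius^[n] x = p * x) : x = 0 := by
  have hcoeff (m : ℕ) : x.coeff m ^ p ^ n = ((p : 𝕎 k) * x).coeff m := by
    rw [← h, iterate_frobenius_coeff]
  ext m
  rw [zero_coeff]
  induction m with
  | zero => exact IsReduced.eq_zero _ ⟨_, (hcoeff 0).trans (p_mul_coeff_zero x)⟩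
  | succ m ih =>
    refine IsReduced.eq_zero _ ⟨_, (hcoeff (m + 1)).trans ?_⟩
    rw [p_mul_coeff_succ, ih, zero_pow hp.out.ne_zero]

end WittVector

section PowEqSelf

variable {K : Type*} [Field K] {q : ℕ} {x₁ x₂ a c : K}

theorem setOf_pow_eq_self_mul_subset_of_mul_eq (ha : a ^ q = a) (hc : c ^ q = c) (ha0 : a ≠ 0)
    (h : x₁ * a = x₂ * c) :
    {z : K | ∃ y : K, y ^ q = y ∧ z = y * x₁} ⊆
      {z : K | ∃ y : K, y ^ q = y ∧ z = y * x₂} := by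
  have hx₁ : x₁ = c / a * x₂ := by
    field_simp
    rw [h, mul_comm]
  rintro _ ⟨y, hy, rfl⟩
  exact ⟨y * (c / a), by rw [mul_pow, div_pow, hy, ha, hc], by rw [hx₁, mul_assoc]⟩

theorem setOf_pow_eq_self_mul_eq_of_mul_eq (ha : a ^ q = a) (hc : c ^ q = c) (ha0 : a ≠ 0)
    (hc0 : c ≠ 0) (h : x₁ * a = x₂ * c) :
    {z : K | ∃ y : K, y ^ q = y ∧ z = y * x₁} =
      {z : K | ∃ y : K, y ^ q = y ∧ z = y * x₂} :=
  (setOf_pow_eq_self_mul_subset_of_mul_eq ha hc ha0 h).antisymm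
    (setOf_pow_eq_self_mul_subset_of_mul_eq hc ha hc0 h.symm)

end PowEqSelf

namespace PhiAlpha

open Matrix

section Blocks

variable {R : Type*} [CommRing R]

/-- The matrix of `φ_α` is `matrix p α`; `matrix 0 ᾱ` is its reduction mod `p`. -/
def matrix (q α : R) : Matrix (Fin 6) (Fin 6) R :=
  !![0, 0, q, 0, α, 0;
     1, 0, 0, 0, 0, 0;
     0, q, 0, 0, 0, 0;
     0, 0, 0, 0, 0, q;
     0, 0, 0, 1, 0, 0;
     0, 0, 0, 0, 1, 0]

def twoThirdsBlock (q : R) : Matrix (Fin 3) (Fin 3) R := !![0, 0, q; 1, 0, 0; 0, q, 0]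

def oneThirdBlock (q : R) : Matrix (Fin 3) (Fin 3) R := !![0, 0, q; 1, 0, 0; 0, 1, 0]

def upperLeft (G : Matrix (Fin 6) (Fin 6) R) : Matrix (Fin 3) (Fin 3) R :=
  G.submatrix (Fin.castAdd 3) (Fin.castAdd 3)

def lowerLeft (G : Matrix (Fin 6) (Fin 6) R) : Matrix (Fin 3) (Fin 3) R :=
  G.submatrix (Fin.natAdd 3) (Fin.castAdd 3)

def lowerRight (G : Matrix (Fin 6) (Fin 6) R) : Matrix (Fin 3) (Fin 3) R :=
  G.submatrix (Fin.natAdd 3) (Fin.natAdd 3)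

theorem twoThirdsBlock_pow_three (q : R) : twoThirdsBlock q ^ 3 = q ^ 2 • 1 := by
  ext i j
  fin_cases i <;> fin_cases j <;> simp [twoThirdsBlock, pow_succ, mul_apply, Fin.sum_univ_three]

theorem oneThirdBlock_pow_three (q : R) : oneThirdBlock q ^ 3 = q • 1 := by
  ext i j
  fin_cases i <;> fin_cases j <;> simp [oneThirdBlock, pow_succ, mul_apply, Fin.sum_univ_three]

variable {S : Type*} [CommRing S] (f : R →+* S)

theorem map_matrix (q α : R) : (matrix q α).map f = matrix (f q) (f α) := by
  ext i j
  fin_cases i <;> fin_cases j <;> simp [matrix]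

theorem map_twoThirdsBlock (q : R) : (twoThirdsBlock q).map f = twoThirdsBlock (f q) := by
  ext i j
  fin_cases i <;> fin_cases j <;> simp [twoThirdsBlock]

theorem map_oneThirdBlock (q : R) : (oneThirdBlock q).map f = oneThirdBlock (f q) := by
  ext i j
  fin_cases i <;> fin_cases j <;> simp [oneThirdBlock]

theorem lowerLeft_map (G : Matrix (Fin 6) (Fin 6) R) :
    lowerLeft (G.map f) = (lowerLeft G).map f :=
  rfl

section Intertwining

variable {σ : R →+* R} {q α₁ α₂ : R} {G : Matrix (Fin 6) (Fin 6) R}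

theorem lowerLeft_mul_twoThirdsBlock (hG : G * matrix q α₁ = matrix q α₂ * G.map σ) :
    lowerLeft G * twoThirdsBlock q = oneThirdBlock q * (lowerLeft G).map σ := by
  ext i j
  have h := congrFun₂ hG (Fin.natAdd 3 i) (Fin.castAdd 3 j)
  fin_cases i <;> fin_cases j <;>
    simpa [lowerLeft, mul_apply, Fin.sum_univ_six, Fin.sum_univ_three, matrix, twoThirdsBlock,
      oneThirdBlock] using h

theorem upperLeft_mul_twoThirdsBlock (hG : G * matrix q α₁ = matrix q α₂ * G.map σ)
    (hL : lowerLeft G = 0) :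
    upperLeft G * twoThirdsBlock q = twoThirdsBlock q * (upperLeft G).map σ := by
  ext i j
  have h := congrFun₂ hG (Fin.castAdd 3 i) (Fin.castAdd 3 j)
  have hL1j := congrFun₂ hL 1 j
  fin_cases i <;> fin_cases j <;>
    simp_all [upperLeft, lowerLeft, mul_apply, Fin.sum_univ_six, Fin.sum_univ_three, matrix,
      twoThirdsBlock]

theorem lowerRight_mul_oneThirdBlock (hG : G * matrix q α₁ = matrix q α₂ * G.map σ)
    (hL : lowerLeft G = 0) :
    lowerRight G * oneThirdBlock q = oneThirdBlock q * (lowerRight G).map σ := by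
  ext i j
  have h := congrFun₂ hG (Fin.natAdd 3 i) (Fin.natAdd 3 j)
  have hLi0 := congrFun₂ hL i 0
  fin_cases i <;> fin_cases j <;>
    simp_all [lowerRight, lowerLeft, mul_apply, Fin.sum_univ_six, Fin.sum_univ_three, matrix,
      oneThirdBlock]

end Intertwining

end Blocks

section ModP

variable {K : Type*} [Field K] {σ : K →+* K} {β₁ β₂ : K} {G : Matrix (Fin 6) (Fin 6) K}

theorem apply_three_three_ne_zero (hG : G * matrix 0 β₁ = matrix 0 β₂ * G.map σ)
    (hL : lowerLeft G = 0) (hunit : IsUnit G) : G 3 3 ≠ 0 := by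
  refine isUnit_iff_ne_zero.mp (isUnit_apply_of_row hunit fun l hl => ?_)
  have hG33 := congrFun₂ hG 3 3
  have hG34 := congrFun₂ hG 3 4
  have hL00 := congrFun₂ hL 0 0
  have hL01 := congrFun₂ hL 0 1
  have hL02 := congrFun₂ hL 0 2
  fin_cases l <;> simp_all [lowerLeft, matrix, mul_apply, Fin.sum_univ_six]

theorem apply_zero_zero_ne_zero (hG : G * matrix 0 β₁ = matrix 0 β₂ * G.map σ)
    (hL : lowerLeft G = 0) (hunit : IsUnit G) : G 0 0 ≠ 0 := by
  have h11 : IsUnit (G 1 1) := isUnit_apply_of_col hunit fun l hl => by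
    have hG00 := congrFun₂ hG 0 0
    have hG20 := congrFun₂ hG 2 0
    have hL10 := congrFun₂ hL 1 0
    have hL01 := congrFun₂ hL 0 1
    have hL11 := congrFun₂ hL 1 1
    have hL21 := congrFun₂ hL 2 1
    fin_cases l <;> simp_all [lowerLeft, matrix, mul_apply, Fin.sum_univ_six]
  have hG10 : G 1 1 = σ (G 0 0) := by
    simpa [matrix, mul_apply, Fin.sum_univ_six] using congrFun₂ hG 1 0
  rw [hG10, isUnit_iff_ne_zero, map_ne_zero] at h11
  exact h11

theorem mul_apply_zero_zero_eq (hG : G * matrix 0 β₁ = matrix 0 β₂ * G.map σ) :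
    β₁ * G 0 0 = β₂ * σ (σ (G 3 3)) := by
  have h04 := congrFun₂ hG 0 4
  have h15 := congrFun₂ hG 1 5
  have h43 := congrFun₂ hG 4 3
  simp only [matrix, Fin.isValue, mul_apply, of_apply, cons_val', cons_val, cons_val_fin_one,
    Fin.sum_univ_six, cons_val_zero, cons_val_one, mul_zero, add_zero, mul_one, map_apply,
    zero_mul, zero_add, one_mul] at h04 h15 h43
  have h05 : G 0 5 = 0 := (map_eq_zero σ).mp h15.symm
  rw [← h43, ← h04, h05, add_zero, mul_comm]

end ModP

section Witt

variable {p : ℕ} [Fact p.Prime]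

local notation "𝕎" => WittVector p

theorem phiAlpha_eq_mulVec {k : Type} [CommRing k] (α : 𝕎 k) (v : Fin 6 → 𝕎 k) :
    phiAlpha p k α v = matrix (p : 𝕎 k) α *ᵥ (WittVector.frobenius ∘ v) := by
  ext1 i
  fin_cases i <;> simp [phiAlpha, matrix, mulVec, dotProduct, Fin.sum_univ_six]

theorem toMatrix'_mul_matrix {k : Type} [CommRing k] {α₁ α₂ : 𝕎 k}
    {f : Module.End (𝕎 k) (Fin 6 → 𝕎 k)}
    (hf : ∀ v, f (phiAlpha p k α₁ v) = phiAlpha p k α₂ (f v)) :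
    LinearMap.toMatrix' f * matrix (p : 𝕎 k) α₁ =
      matrix (p : 𝕎 k) α₂ * (LinearMap.toMatrix' f).map WittVector.frobenius := by
  refine ext_of_mulVec_single fun j => ?_
  have hsingle : (WittVector.frobenius ∘ Pi.single j 1 : Fin 6 → 𝕎 k) = Pi.single j 1 := by
    ext1 i
    by_cases h : i = j <;> simp [h]
  have hj := hf (Pi.single j 1)
  rw [phiAlpha_eq_mulVec, phiAlpha_eq_mulVec, hsingle, ← LinearMap.toMatrix'_mulVec f,
    ← LinearMap.toMatrix'_mulVec f] at hj
  rw [← mulVec_mulVec, ← mulVec_mulVec, hj]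
  congr 1
  ext1 i
  rw [Function.comp_apply, RingHom.map_mulVec, hsingle]

variable {k : Type*} [CommRing k]

theorem map_frobenius_twoThirdsBlock :
    (twoThirdsBlock (p : 𝕎 k)).map WittVector.frobenius = twoThirdsBlock (p : 𝕎 k) := by
  rw [map_twoThirdsBlock, map_natCast]

theorem map_frobenius_oneThirdBlock :
    (oneThirdBlock (p : 𝕎 k)).map WittVector.frobenius = oneThirdBlock (p : 𝕎 k) := by
  rw [map_oneThirdBlock, map_natCast]

variable [CharP k p] {α₁ α₂ : WittVector p k} {G : Matrix (Fin 6) (Fin 6) (WittVector p k)}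

theorem map_constantCoeff_mul_matrix
    (hG : G * matrix (p : 𝕎 k) α₁ = matrix (p : 𝕎 k) α₂ * G.map WittVector.frobenius) :
    G.map WittVector.constantCoeff * matrix 0 (WittVector.constantCoeff α₁) =
      matrix 0 (WittVector.constantCoeff α₂) *
        (G.map WittVector.constantCoeff).map (frobenius k p) := by
  have h := congrArg (Matrix.map · WittVector.constantCoeff) hG
  simp only [Matrix.map_mul, map_matrix, WittVector.constantCoeff_natCast_p, Matrix.map_map,
    ← RingHom.coe_comp, WittVector.constantCoeff_comp_frobenius] at h
  exact h

variable [IsDomain k]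

theorem lowerLeft_eq_zero
    (hG : G * matrix (p : 𝕎 k) α₁ = matrix (p : 𝕎 k) α₂ * G.map WittVector.frobenius) :
    lowerLeft G = 0 := by
  have h := mul_pow_eq_pow_mul_map_pow map_frobenius_twoThirdsBlock map_frobenius_oneThirdBlock 3
    (lowerLeft_mul_twoThirdsBlock hG)
  rw [twoThirdsBlock_pow_three, oneThirdBlock_pow_three, Matrix.mul_smul, Matrix.mul_one,
    Matrix.smul_mul, Matrix.one_mul, pow_two, mul_smul] at h
  have h' := smul_right_injective _ WittVector.natCast_p_ne_zero h
  exact Matrix.ext fun i j =>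
    WittVector.eq_zero_of_iterate_frobenius_eq_p_mul (n := 3) (congrFun₂ h' i j).symm

theorem upperLeft_map_iterate_frobenius_three
    (hG : G * matrix (p : 𝕎 k) α₁ = matrix (p : 𝕎 k) α₂ * G.map WittVector.frobenius) :
    (upperLeft G).map (⇑WittVector.frobenius)^[3] = upperLeft G := by
  have h := mul_pow_eq_pow_mul_map_pow map_frobenius_twoThirdsBlock map_frobenius_twoThirdsBlock 3
    (upperLeft_mul_twoThirdsBlock hG (lowerLeft_eq_zero hG))
  rw [twoThirdsBlock_pow_three, Matrix.mul_smul, Matrix.mul_one, Matrix.smul_mul,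
    Matrix.one_mul] at h
  exact (smul_right_injective _ (pow_ne_zero 2 WittVector.natCast_p_ne_zero) h).symm

theorem lowerRight_map_iterate_frobenius_three
    (hG : G * matrix (p : 𝕎 k) α₁ = matrix (p : 𝕎 k) α₂ * G.map WittVector.frobenius) :
    (lowerRight G).map (⇑WittVector.frobenius)^[3] = lowerRight G := by
  have h := mul_pow_eq_pow_mul_map_pow map_frobenius_oneThirdBlock map_frobenius_oneThirdBlock 3
    (lowerRight_mul_oneThirdBlock hG (lowerLeft_eq_zero hG))
  rw [oneThirdBlock_pow_three, Matrix.mul_smul, Matrix.mul_one, Matrix.smul_mul,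
    Matrix.one_mul] at h
  exact (smul_right_injective _ WittVector.natCast_p_ne_zero h).symm

end Witt

end PhiAlpha

open PhiAlpha WittVector in
theorem stmt17_general (p : ℕ) [Fact p.Prime] (k : Type) [Field k] [CharP k p]
    (α₁ α₂ : WittVector p k)
    (hsub : {z : k | ∃ y : k, y ^ (p ^ 3) = y ∧ z = y * α₁.coeff 0} ≠
            {z : k | ∃ y : k, y ^ (p ^ 3) = y ∧ z = y * α₂.coeff 0}) :
    ¬ ∃ g : (Module.End (WittVector p k) (Fin 6 → WittVector p k))ˣ,
        ∀ v, (g : Module.End (WittVector p k) (Fin 6 → WittVector p k)) (phiAlpha p k α₁ v) =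
          phiAlpha p k α₂ ((g : Module.End (WittVector p k) (Fin 6 → WittVector p k)) v) := by
  rintro ⟨g, hg⟩
  set G := LinearMap.toMatrix' (g : Module.End (WittVector p k) (Fin 6 → WittVector p k))
  have hG := toMatrix'_mul_matrix hg
  have hGbar := map_constantCoeff_mul_matrix hG
  have hL : lowerLeft (G.map constantCoeff) = 0 := by
    rw [lowerLeft_map, lowerLeft_eq_zero hG, Matrix.map_zero _ (map_zero _)]
  have hunit : IsUnit (G.map constantCoeff) :=
    (g.isUnit.map LinearMap.toMatrixAlgEquiv').map
      (constantCoeff : WittVector p k →+* k).mapMatrix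
  have ha := constantCoeff_pow_eq_self_of_iterate_frobenius_eq
    (congrFun₂ (upperLeft_map_iterate_frobenius_three hG) 0 0)
  have hc := constantCoeff_pow_eq_self_of_iterate_frobenius_eq
    (congrFun₂ (lowerRight_map_iterate_frobenius_three hG) 0 0)
  refine hsub (setOf_pow_eq_self_mul_eq_of_mul_eq ha ?_ (apply_zero_zero_ne_zero hGbar hL hunit)
    ?_ (mul_apply_zero_zero_eq hGbar))
  · rw [← map_pow, ← map_pow]
    exact congrArg _ (congrArg _ hc)
  · exact (map_ne_zero _).mpr ((map_ne_zero _).mpr (apply_three_three_ne_zero hGbar hL hunit))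

/-- For `d = 3` and `α₁, α₂ ∈ W(k) \ {0}` such that the `𝔽_{p³}`-subspace of
`k` generated by `α₁ mod p` differs from the one generated by `α₂ mod p`, the Dieudonné
modules `(M, φ_{α₁})` and `(M, φ_{α₂})` are not isomorphic. -/
theorem stmt17 (p : ℕ) [Fact p.Prime] (k : Type) [Field k] [CharP k p] [IsAlgClosed k]
    (α₁ α₂ : WittVector p k) (hα₁ : α₁ ≠ 0) (hα₂ : α₂ ≠ 0)
    (hsub : {z : k | ∃ y : k, y ^ (p ^ 3) = y ∧ z = y * α₁.coeff 0} ≠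
            {z : k | ∃ y : k, y ^ (p ^ 3) = y ∧ z = y * α₂.coeff 0}) :
    ¬ ∃ g : (Module.End (WittVector p k) (Fin 6 → WittVector p k))ˣ,
        ∀ v, (g : Module.End (WittVector p k) (Fin 6 → WittVector p k)) (phiAlpha p k α₁ v) =
          phiAlpha p k α₂ ((g : Module.End (WittVector p k) (Fin 6 → WittVector p k)) v) :=
  stmt17_general p k α₁ α₂ hsub
end
end
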